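/- arXiv:math/0407412 — 8 statements merged into one kernel-verified Lean document; each statement's English description precedes it below -/
import Mathlib

section
/- Suppose j < k < l and v ⋖ v(k,l) ⋖ v(k,l)(j,l) = w is a saturated chain of length two in the Bruhat order from v to w. Then v ⋖ v(j,k) ⋖ v(j,k)(k,l) = w is also a saturated chain in the Bruhat order from v to w. -/
noncomputable section

/-- The length (number of inversions) of a finitely supported permutation of ℕ. -/
def len (w : Equiv.Perm ℕ) : ℕ := Set.ncard {p : ℕ × ℕ | p.1 < p.2 ∧ w p.2 < w p.1}

/-- `covTrans v a b` : the permutation `v·(a,b)` (swap the values in positions `a < b`,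
positive integers) covers `v` in the Bruhat order, i.e. `ℓ(v·(a,b)) = ℓ(v) + 1`. -/
def covTrans (v : Equiv.Perm ℕ) (a b : ℕ) : Prop :=
  0 < a ∧ a < b ∧ len (v * Equiv.swap a b) = len v + 1

namespace BAux

def Inv (v : Equiv.Perm ℕ) : Set (ℕ × ℕ) := {p | p.1 < p.2 ∧ v p.2 < v p.1}

lemma len_eq (v : Equiv.Perm ℕ) : len v = (Inv v).ncard := rfl

def S (v : Equiv.Perm ℕ) (a b : ℕ) : Set (ℕ × ℕ) :=
  {p | Equiv.swap a b p.1 < Equiv.swap a b p.2 ∧ v p.2 < v p.1}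

lemma phi_inj (a b : ℕ) :
    Function.Injective (fun p : ℕ × ℕ => (Equiv.swap a b p.1, Equiv.swap a b p.2)) := by
  rintro ⟨x, y⟩ ⟨x', y'⟩ h
  simp only [Prod.mk.injEq] at h
  exact Prod.ext ((Equiv.swap a b).injective h.1) ((Equiv.swap a b).injective h.2)

lemma inv_mul_swap (v : Equiv.Perm ℕ) (a b : ℕ) :
    Inv (v * Equiv.swap a b)
      = (fun p : ℕ × ℕ => (Equiv.swap a b p.1, Equiv.swap a b p.2)) '' S v a b := by
  ext ⟨x, y⟩
  constructor
  · rintro ⟨h1, h2⟩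
    refine ⟨(Equiv.swap a b x, Equiv.swap a b y), ⟨?_, ?_⟩, ?_⟩
    · simpa using h1
    · simpa using h2
    · simp
  · rintro ⟨⟨p, q⟩, ⟨h1, h2⟩, h3⟩
    simp only [Prod.mk.injEq] at h3
    obtain ⟨rfl, rfl⟩ := h3
    exact ⟨h1, by simpa using h2⟩

lemma len_mul_swap (v : Equiv.Perm ℕ) (a b : ℕ) :
    len (v * Equiv.swap a b) = (S v a b).ncard := by
  rw [len_eq, inv_mul_swap, Set.ncard_image_of_injective _ (phi_inj a b)]

def Bigset (a b : ℕ) : Set (ℕ × ℕ) :=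
  {p | (p.1 = b ∧ p.2 = a) ∨ (p.2 = a ∧ a < p.1 ∧ p.1 < b) ∨ (p.1 = b ∧ a < p.2 ∧ p.2 < b)}

lemma bigset_finite (a b : ℕ) : (Bigset a b).Finite := by
  apply Set.Finite.subset ((Set.finite_Icc 0 (a+b)).prod (Set.finite_Icc 0 (a+b)))
  rintro ⟨x, y⟩ h
  simp only [Bigset, Set.mem_setOf_eq] at h
  simp only [Set.mem_prod, Set.mem_Icc]
  omega

lemma S_subset (v : Equiv.Perm ℕ) (a b : ℕ) (hab : a < b) :
    S v a b ⊆ Inv v ∪ Bigset a b := by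
  rintro ⟨x, y⟩ ⟨h1, h2⟩
  by_cases hxy : x < y
  · exact Or.inl ⟨hxy, h2⟩
  · right
    have hne : x ≠ y := fun h => by simp [h] at h2
    simp only [Bigset, Set.mem_setOf_eq]
    by_cases hxa : x = a <;> by_cases hxb : x = b <;> by_cases hya : y = a <;>
      by_cases hyb : y = b <;> subst_vars <;>
      simp_all [Equiv.swap_apply_left, Equiv.swap_apply_right,
        Equiv.swap_apply_of_ne_of_ne] <;> omega

lemma inv_finite_mul_swap (v : Equiv.Perm ℕ) (a b : ℕ) (hab : a < b)
    (hfin : (Inv v).Finite) : (Inv (v * Equiv.swap a b)).Finite := by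
  rw [inv_mul_swap]
  exact ((hfin.union (bigset_finite a b)).subset (S_subset v a b hab)).image _

/-! ### The explicit difference sets -/

def Dset (v : Equiv.Perm ℕ) (a b : ℕ) : Set (ℕ × ℕ) :=
  {p | (p.1 = a ∧ a < p.2 ∧ p.2 < b ∧ v p.2 < v a) ∨
       (p.2 = b ∧ a < p.1 ∧ p.1 < b ∧ v b < v p.1)}

def Aset (v : Equiv.Perm ℕ) (a b : ℕ) : Set (ℕ × ℕ) :=
  {p | (p.1 = b ∧ p.2 = a) ∨
       (p.2 = a ∧ a < p.1 ∧ p.1 < b ∧ v a < v p.1) ∨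
       (p.1 = b ∧ a < p.2 ∧ p.2 < b ∧ v p.2 < v b)}

def P (v : Equiv.Perm ℕ) (a b : ℕ) : Set ℕ := {c | a < c ∧ c < b ∧ v c < v a}
def Q (v : Equiv.Perm ℕ) (a b : ℕ) : Set ℕ := {c | a < c ∧ c < b ∧ v b < v c}
def P' (v : Equiv.Perm ℕ) (a b : ℕ) : Set ℕ := {c | a < c ∧ c < b ∧ v a < v c}
def Q' (v : Equiv.Perm ℕ) (a b : ℕ) : Set ℕ := {c | a < c ∧ c < b ∧ v c < v b}
def E (v : Equiv.Perm ℕ) (a b : ℕ) : Set ℕ := {c | a < c ∧ c < b ∧ v a < v c ∧ v c < v b}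

lemma subset_Ioo_finite {s : Set ℕ} (a b : ℕ) (h : s ⊆ Set.Ioo a b) : s.Finite :=
  (Set.finite_Ioo a b).subset h

lemma P_fin (v a b) : (P v a b).Finite := subset_Ioo_finite a b (fun c hc => ⟨hc.1, hc.2.1⟩)
lemma Q_fin (v a b) : (Q v a b).Finite := subset_Ioo_finite a b (fun c hc => ⟨hc.1, hc.2.1⟩)
lemma P'_fin (v a b) : (P' v a b).Finite := subset_Ioo_finite a b (fun c hc => ⟨hc.1, hc.2.1⟩)
lemma Q'_fin (v a b) : (Q' v a b).Finite := subset_Ioo_finite a b (fun c hc => ⟨hc.1, hc.2.1⟩)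
lemma E_fin (v a b) : (E v a b).Finite := subset_Ioo_finite a b (fun c hc => ⟨hc.1, hc.2.1⟩)

lemma Dset_eq (v : Equiv.Perm ℕ) (a b : ℕ) :
    Dset v a b = (fun c => ((a : ℕ), c)) '' P v a b ∪ (fun c => (c, (b : ℕ))) '' Q v a b := by
  ext ⟨x, y⟩
  simp only [Dset, P, Q, Set.mem_union, Set.mem_image, Set.mem_setOf_eq, Prod.mk.injEq]
  constructor
  · rintro (⟨rfl, h1, h2, h3⟩ | ⟨rfl, h1, h2, h3⟩)
    · exact Or.inl ⟨y, ⟨h1, h2, h3⟩, rfl, rfl⟩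
    · exact Or.inr ⟨x, ⟨h1, h2, h3⟩, rfl, rfl⟩
  · rintro (⟨c, hc, rfl, rfl⟩ | ⟨c, hc, rfl, rfl⟩)
    · exact Or.inl ⟨rfl, hc.1, hc.2.1, hc.2.2⟩
    · exact Or.inr ⟨rfl, hc.1, hc.2.1, hc.2.2⟩

lemma Dset_fin (v a b) : (Dset v a b).Finite := by
  rw [Dset_eq]
  exact ((P_fin v a b).image _).union ((Q_fin v a b).image _)

lemma ncard_Dset (v : Equiv.Perm ℕ) (a b : ℕ) :
    (Dset v a b).ncard = (P v a b).ncard + (Q v a b).ncard := by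
  rw [Dset_eq, Set.ncard_union_eq ?disj (((P_fin v a b)).image _) ((Q_fin v a b).image _),
    Set.ncard_image_of_injective _ (fun c d h => by simpa using h),
    Set.ncard_image_of_injective _ (fun c d h => by simpa using h)]
  case disj =>
    rw [Set.disjoint_left]
    rintro ⟨x, y⟩ ⟨c, ⟨hc1, hc2, hc3⟩, heq⟩ ⟨c', ⟨hc1', hc2', hc3'⟩, heq'⟩
    simp only [Prod.mk.injEq] at heq heq'
    omega

lemma Aset_eq (v : Equiv.Perm ℕ) (a b : ℕ) (hab : a < b) :
    Aset v a b = insert ((b : ℕ), (a : ℕ))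
      ((fun c => (c, (a : ℕ))) '' P' v a b ∪ (fun c => ((b : ℕ), c)) '' Q' v a b) := by
  ext ⟨x, y⟩
  simp only [Aset, P', Q', Set.mem_insert_iff, Set.mem_union, Set.mem_image,
    Set.mem_setOf_eq, Prod.mk.injEq]
  constructor
  · rintro (⟨rfl, rfl⟩ | ⟨rfl, h1, h2, h3⟩ | ⟨rfl, h1, h2, h3⟩)
    · exact Or.inl ⟨rfl, rfl⟩
    · exact Or.inr (Or.inl ⟨x, ⟨h1, h2, h3⟩, rfl, rfl⟩)
    · exact Or.inr (Or.inr ⟨y, ⟨h1, h2, h3⟩, rfl, rfl⟩)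
  · rintro (⟨rfl, rfl⟩ | ⟨c, hc, rfl, rfl⟩ | ⟨c, hc, rfl, rfl⟩)
    · exact Or.inl ⟨rfl, rfl⟩
    · exact Or.inr (Or.inl ⟨rfl, hc.1, hc.2.1, hc.2.2⟩)
    · exact Or.inr (Or.inr ⟨rfl, hc.1, hc.2.1, hc.2.2⟩)

lemma Aset_fin (v a b) (hab : a < b) : (Aset v a b).Finite := by
  rw [Aset_eq v a b hab]
  exact (((P'_fin v a b).image _).union ((Q'_fin v a b).image _)).insert _

lemma ncard_Aset (v : Equiv.Perm ℕ) (a b : ℕ) (hab : a < b) :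
    (Aset v a b).ncard = 1 + (P' v a b).ncard + (Q' v a b).ncard := by
  rw [Aset_eq v a b hab]
  rw [Set.ncard_insert_of_notMem ?notmem
    (((P'_fin v a b).image _).union ((Q'_fin v a b).image _)),
    Set.ncard_union_eq ?disj ((P'_fin v a b).image _) ((Q'_fin v a b).image _),
    Set.ncard_image_of_injective _ (fun c d h => by simpa using h),
    Set.ncard_image_of_injective _ (fun c d h => by simpa using h)]
  · omega
  case notmem =>
    rintro (⟨c, hc, heq⟩ | ⟨c, hc, heq⟩) <;>
      · simp only [Prod.mk.injEq] at heq
        obtain ⟨h1, h2⟩ := heq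
        obtain ⟨hc1, hc2, hc3⟩ := hc
        omega
  case disj =>
    rw [Set.disjoint_left]
    rintro ⟨x, y⟩ ⟨c, ⟨hc1, hc2, hc3⟩, heq⟩ ⟨c', ⟨hc1', hc2', hc3'⟩, heq'⟩
    simp only [Prod.mk.injEq] at heq heq'
    omega

lemma ncard_P' (v : Equiv.Perm ℕ) (a b : ℕ) (hvab : v a < v b) :
    (P' v a b).ncard = (E v a b).ncard + (Q v a b).ncard := by
  have hsplit : P' v a b = E v a b ∪ Q v a b := by
    ext c
    simp only [P', E, Q, Set.mem_union, Set.mem_setOf_eq]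
    have h := v.injective.eq_iff (a := c) (b := b)
    omega
  rw [hsplit, Set.ncard_union_eq ?disj (E_fin v a b) (Q_fin v a b)]
  case disj =>
    rw [Set.disjoint_left]
    rintro c ⟨h1, h2, h3, h4⟩ ⟨h5, h6, h7⟩
    omega

lemma ncard_Q' (v : Equiv.Perm ℕ) (a b : ℕ) (hvab : v a < v b) :
    (Q' v a b).ncard = (P v a b).ncard + (E v a b).ncard := by
  have hsplit : Q' v a b = P v a b ∪ E v a b := by
    ext c
    simp only [Q', P, E, Set.mem_union, Set.mem_setOf_eq]
    have h := v.injective.eq_iff (a := c) (b := a)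
    omega
  rw [hsplit, Set.ncard_union_eq ?disj (P_fin v a b) (E_fin v a b)]
  case disj =>
    rw [Set.disjoint_left]
    rintro c ⟨h1, h2, h3⟩ ⟨h4, h5, h6, h7⟩
    omega

/-! ### The main identity -/

lemma main_identity (v : Equiv.Perm ℕ) (a b : ℕ) (hab : a < b) (hvab : v a < v b) :
    S v a b ∪ Dset v a b = Inv v ∪ Aset v a b := by
  ext ⟨x, y⟩
  simp only [S, Dset, Inv, Aset, Set.mem_union, Set.mem_setOf_eq]
  by_cases hxa : x = a <;> by_cases hxb : x = b <;> by_cases hya : y = a <;>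
    by_cases hyb : y = b <;> subst_vars <;>
    simp_all [Equiv.swap_apply_left, Equiv.swap_apply_right,
      Equiv.swap_apply_of_ne_of_ne] <;> omega

lemma disj_S_Dset (v : Equiv.Perm ℕ) (a b : ℕ) (hab : a < b) :
    Disjoint (S v a b) (Dset v a b) := by
  rw [Set.disjoint_left]
  rintro ⟨x, y⟩ ⟨h1, h2⟩ (⟨rfl, hd1, hd2, hd3⟩ | ⟨rfl, hd1, hd2, hd3⟩)
  · rw [Equiv.swap_apply_left, Equiv.swap_apply_of_ne_of_ne (by omega) (by omega)] at h1
    omega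
  · rw [Equiv.swap_apply_right, Equiv.swap_apply_of_ne_of_ne (by omega) (by omega)] at h1
    omega

lemma disj_Inv_Aset (v : Equiv.Perm ℕ) (a b : ℕ) (hab : a < b) :
    Disjoint (Inv v) (Aset v a b) := by
  rw [Set.disjoint_left]
  rintro ⟨x, y⟩ ⟨h1, h2⟩ (⟨rfl, rfl⟩ | ⟨rfl, ha1, ha2, ha3⟩ | ⟨rfl, ha1, ha2, ha3⟩) <;> omega

lemma key (v : Equiv.Perm ℕ) (a b : ℕ) (hab : a < b) (hvab : v a < v b)
    (hfin : (Inv v).Finite) :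
    len (v * Equiv.swap a b) = len v + 1 + 2 * (E v a b).ncard := by
  have hSfin : (S v a b).Finite :=
    (hfin.union (bigset_finite a b)).subset (S_subset v a b hab)
  have hbal : (S v a b).ncard + (Dset v a b).ncard
      = (Inv v).ncard + (Aset v a b).ncard := by
    rw [← Set.ncard_union_eq (disj_S_Dset v a b hab) hSfin (Dset_fin v a b),
      ← Set.ncard_union_eq (disj_Inv_Aset v a b hab) hfin (Aset_fin v a b hab),
      main_identity v a b hab hvab]
  have h1 := ncard_Dset v a b
  have h2 := ncard_Aset v a b hab
  have h3 := ncard_P' v a b hvab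
  have h4 := ncard_Q' v a b hvab
  rw [len_mul_swap, len_eq]
  omega

lemma mul_swap_swap (v : Equiv.Perm ℕ) (a b : ℕ) :
    v * Equiv.swap a b * Equiv.swap a b = v := by
  rw [mul_assoc, Equiv.swap_mul_self, mul_one]

lemma cov_iff (v : Equiv.Perm ℕ) (a b : ℕ) (hab : a < b) (hfin : (Inv v).Finite) :
    len (v * Equiv.swap a b) = len v + 1 ↔
      v a < v b ∧ ∀ c, a < c → c < b → ¬(v a < v c ∧ v c < v b) := by
  constructor
  · intro h
    rcases lt_trichotomy (v a) (v b) with hv | hv | hv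
    · refine ⟨hv, ?_⟩
      have hk := key v a b hab hv hfin
      have hE : (E v a b).ncard = 0 := by omega
      have hE' : E v a b = ∅ := (Set.ncard_eq_zero (E_fin v a b)).mp hE
      intro c h1 h2 h3
      exact Set.eq_empty_iff_forall_notMem.mp hE' c ⟨h1, h2, h3.1, h3.2⟩
    · exact absurd (v.injective hv) (by omega)
    · exfalso
      set w := v * Equiv.swap a b with hw
      have hwa : w a = v b := by
        rw [hw, Equiv.Perm.mul_apply, Equiv.swap_apply_left]
      have hwb : w b = v a := by
        rw [hw, Equiv.Perm.mul_apply, Equiv.swap_apply_right]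
      have hwab : w a < w b := by rw [hwa, hwb]; exact hv
      have hwfin : (Inv w).Finite := inv_finite_mul_swap v a b hab hfin
      have hk := key w a b hab hwab hwfin
      rw [mul_swap_swap] at hk
      omega
  · rintro ⟨hv, hcond⟩
    have hE : E v a b = ∅ := by
      ext c
      simp only [E, Set.mem_setOf_eq, Set.mem_empty_iff_false, iff_false, not_and]
      intro h1 h2 h3 h4
      exact hcond c h1 h2 ⟨h3, h4⟩
    rw [key v a b hab hv hfin, hE, Set.ncard_empty, Nat.mul_zero, Nat.add_zero]

lemma swap_identity (j k l : ℕ) (hjk : j < k) (hkl : k < l) :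
    Equiv.swap j k * Equiv.swap k l = Equiv.swap k l * Equiv.swap j l := by
  ext x
  simp only [Equiv.Perm.mul_apply, Equiv.swap_apply_def]
  split_ifs <;> omega

end BAux

open BAux in
/-- Intertwining relation 2(a): if `j < k < l` and `v ⋖ v(k,l) ⋖ v(k,l)(j,l) = w` is a
saturated chain in Bruhat order, then `v ⋖ v(j,k) ⋖ v(j,k)(k,l) = w` is also a saturated
chain from `v` to `w`. -/
theorem intertwine_2a (v : Equiv.Perm ℕ) (j k l : ℕ) (hjk : j < k) (hkl : k < l)
    (c1 : covTrans v k l) (c2 : covTrans (v * Equiv.swap k l) j l) :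
    covTrans v j k ∧ covTrans (v * Equiv.swap j k) k l ∧
      v * Equiv.swap j k * Equiv.swap k l = v * Equiv.swap k l * Equiv.swap j l := by
  obtain ⟨hk0, hkl', hl1⟩ := c1
  obtain ⟨hj0, hjl', hl2⟩ := c2
  have hfin : (Inv v).Finite := by
    by_contra h
    have h1 : ¬ (Inv (v * Equiv.swap k l)).Finite := by
      intro hf
      have := inv_finite_mul_swap (v * Equiv.swap k l) k l hkl hf
      rw [mul_swap_swap] at this
      exact h this
    have e1 : len v = 0 := by rw [len_eq]; exact Set.Infinite.ncard h
    have e2 : len (v * Equiv.swap k l) = 0 := by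
      rw [len_eq]; exact Set.Infinite.ncard h1
    omega
  have hfinu : (Inv (v * Equiv.swap k l)).Finite := inv_finite_mul_swap v k l hkl hfin
  obtain ⟨hBC, hE1⟩ := (cov_iff v k l hkl hfin).mp hl1
  obtain ⟨hAB0, hE2⟩ := (cov_iff (v * Equiv.swap k l) j l hjl' hfinu).mp hl2
  have huj : (v * Equiv.swap k l) j = v j := by
    rw [Equiv.Perm.mul_apply, Equiv.swap_apply_of_ne_of_ne (by omega) (by omega)]
  have hul : (v * Equiv.swap k l) l = v k := by
    rw [Equiv.Perm.mul_apply, Equiv.swap_apply_right]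
  have hAB : v j < v k := by rwa [huj, hul] at hAB0
  refine ⟨⟨hj0, hjk, ?_⟩, ⟨hj0.trans hjk, hkl, ?_⟩, ?_⟩
  · refine (cov_iff v j k hjk hfin).mpr ⟨hAB, ?_⟩
    intro c h1 h2 h3
    have hc : (v * Equiv.swap k l) c = v c := by
      rw [Equiv.Perm.mul_apply, Equiv.swap_apply_of_ne_of_ne (by omega) (by omega)]
    exact hE2 c h1 (h2.trans hkl) ⟨by rw [huj, hc]; exact h3.1, by rw [hc, hul]; exact h3.2⟩
  · have hfinu' : (Inv (v * Equiv.swap j k)).Finite := inv_finite_mul_swap v j k hjk hfin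
    refine (cov_iff (v * Equiv.swap j k) k l hkl hfinu').mpr ⟨?_, ?_⟩
    · rw [Equiv.Perm.mul_apply, Equiv.Perm.mul_apply, Equiv.swap_apply_right,
        Equiv.swap_apply_of_ne_of_ne (by omega) (by omega)]
      exact hAB.trans hBC
    · intro m h1 h2 h3
      have hm : (v * Equiv.swap j k) m = v m := by
        rw [Equiv.Perm.mul_apply, Equiv.swap_apply_of_ne_of_ne (by omega) (by omega)]
      have hmk : (v * Equiv.swap j k) k = v j := by
        rw [Equiv.Perm.mul_apply, Equiv.swap_apply_right]
      have hml : (v * Equiv.swap j k) l = v l := by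
        rw [Equiv.Perm.mul_apply, Equiv.swap_apply_of_ne_of_ne (by omega) (by omega)]
      rw [hmk, hm, hml] at h3
      rcases lt_trichotomy (v m) (v k) with hv | hv | hv
      · have hmu : (v * Equiv.swap k l) m = v m := by
          rw [Equiv.Perm.mul_apply, Equiv.swap_apply_of_ne_of_ne (by omega) (by omega)]
        exact hE2 m (hjk.trans h1) h2 ⟨by rw [huj, hmu]; exact h3.1, by rw [hmu, hul]; exact hv⟩
      · exact absurd (v.injective hv) (by omega)
      · exact hE1 m h1 h2 ⟨hv, h3.2⟩
  · rw [mul_assoc, mul_assoc, swap_identity j k l hjk hkl]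

end
end

section
/- Suppose j < k < l and v ⋖ v(j,l) ⋖ v(j,l)(j,k) = w is a saturated chain of length two in the Bruhat order from v to w. Then v ⋖ v(j,k) ⋖ v(j,k)(k,l) = w is also a saturated chain in the Bruhat order from v to w. -/
noncomputable section

/-!
Multiplying `v` on the right by a transposition `(a b)` with `a < b` changes its inversion set
by a symmetric difference with the inversion set of `(a b)`, which consists of the pairs
`(a, m)` with `a < m ≤ b` and `(m, b)` with `a < m < b`. When `v a < v b`, counting gives
`ℓ(v (a b)) = ℓ(v) + 1 + 2 #{m ∈ (a, b) | v a < v m < v b}`, so `v ⋖ v (a b)` exactly when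
`v a < v b` and no position strictly between `a` and `b` carries a value between `v a` and `v b`.

In these terms the hypotheses say `v j < v l < v k`, with no value of `(v j, v l)` at a position
in `(j, l)` and no value of `(v l, v k)` at a position in `(j, k)`. Splitting a value in
`(v j, v k)` at `v l` gives the first cover of the new chain, and the second one is a restriction
of the first hypothesis; both chains end at `v` times the same 3-cycle.
-/

theorem Set.ncard_symmDiff_add_two_mul_ncard_inter {α : Type*} {s t : Set α} (hs : s.Finite)
    (ht : t.Finite) : (symmDiff s t).ncard + 2 * (s ∩ t).ncard = s.ncard + t.ncard := by
  have hsub : s ∩ t ⊆ s ∪ t := Set.inter_subset_left.trans Set.subset_union_left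
  rw [symmDiff_eq_sup_sdiff_inf]
  change ((s ∪ t) \ (s ∩ t)).ncard + _ = _
  rw [Set.ncard_sdiff hsub (hs.subset Set.inter_subset_left),
    ← Set.ncard_union_add_ncard_inter s t hs ht]
  have := Set.ncard_le_ncard hsub (hs.union ht)
  omega

theorem Set.ncard_singleton_prod_union_prod_singleton {α β : Type*} {a : α} {b : β} {s : Set β}
    {t : Set α} (ha : a ∉ t) (hs : s.Finite) (ht : t.Finite) :
    ({a} ×ˢ s ∪ t ×ˢ {b}).ncard = s.ncard + t.ncard := by
  have hdisj : Disjoint ({a} ×ˢ s) (t ×ˢ {b}) :=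
    Set.disjoint_left.2 fun p h₁ h₂ => ha (Set.mem_singleton_iff.1 h₁.1 ▸ h₂.1)
  rw [Set.ncard_union_eq hdisj ((Set.finite_singleton a).prod hs)
      (ht.prod (Set.finite_singleton b)),
    Set.ncard_prod, Set.ncard_prod, Set.ncard_singleton, Set.ncard_singleton, one_mul, mul_one]

open Set

namespace Equiv.Perm

def invSet (w : Perm ℕ) : Set (ℕ × ℕ) := {p | p.1 < p.2 ∧ w p.2 < w p.1}

theorem len_eq_ncard_invSet (w : Perm ℕ) : len w = w.invSet.ncard := rfl

def sortPair (t : Perm ℕ) (p : ℕ × ℕ) : ℕ × ℕ :=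
  (min (t p.1) (t p.2), max (t p.1) (t p.2))

variable {t : Perm ℕ} {a b : ℕ}

theorem sortPair_sortPair (ht : Function.Involutive t) {p : ℕ × ℕ} (hp : p.1 ≤ p.2) :
    sortPair t (sortPair t p) = p := by
  obtain ⟨p₁, p₂⟩ := p
  rcases le_total (t p₁) (t p₂) with h | h <;> simp [sortPair, h, ht p₁, ht p₂, hp]

theorem sortPair_mem_invSet_mul_iff (v : Perm ℕ) (ht : Function.Involutive t) {p : ℕ × ℕ}
    (hp : p.1 ≤ p.2) : sortPair t p ∈ (v * t).invSet ↔ p ∈ symmDiff v.invSet t.invSet := by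
  obtain ⟨p₁, p₂⟩ := p
  have hv : v p₁ = v p₂ ↔ p₁ = p₂ := v.injective.eq_iff
  have ht' : t p₁ = t p₂ ↔ p₁ = p₂ := t.injective.eq_iff
  rcases le_total (t p₁) (t p₂) with h | h <;>
    simp only [sortPair, invSet, mem_symmDiff, mem_ofPred_eq, mul_apply, min_eq_left, max_eq_right,
      min_eq_right, max_eq_left, h, ht p₁, ht p₂] at hp ⊢ <;> omega

theorem fst_lt_snd_of_mem_symmDiff {v : Perm ℕ} {p : ℕ × ℕ}
    (hp : p ∈ symmDiff v.invSet t.invSet) : p.1 < p.2 := by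
  rcases hp with ⟨⟨h, -⟩, -⟩ | ⟨⟨h, -⟩, -⟩ <;> exact h

theorem injOn_sortPair_symmDiff (v : Perm ℕ) (ht : Function.Involutive t) :
    InjOn (sortPair t) (symmDiff v.invSet t.invSet) := fun p hp q hq hpq => by
  rw [← sortPair_sortPair ht (fst_lt_snd_of_mem_symmDiff hp).le, hpq,
    sortPair_sortPair ht (fst_lt_snd_of_mem_symmDiff hq).le]

theorem image_sortPair_symmDiff (v : Perm ℕ) (ht : Function.Involutive t) :
    sortPair t '' symmDiff v.invSet t.invSet = (v * t).invSet := by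
  ext p
  constructor
  · rintro ⟨q, hq, rfl⟩
    exact (sortPair_mem_invSet_mul_iff v ht (fst_lt_snd_of_mem_symmDiff hq).le).2 hq
  · intro hp
    have hp' : p.1 ≤ p.2 := hp.1.le
    refine ⟨sortPair t p, (sortPair_mem_invSet_mul_iff v ht (min_le_max)).1 ?_,
      sortPair_sortPair ht hp'⟩
    rwa [sortPair_sortPair ht hp']

theorem ncard_invSet_mul (v : Perm ℕ) (ht : Function.Involutive t) :
    (v * t).invSet.ncard = (symmDiff v.invSet t.invSet).ncard := by
  rw [← image_sortPair_symmDiff v ht, (injOn_sortPair_symmDiff v ht).ncard_image]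

theorem finite_invSet_mul_iff (v : Perm ℕ) (ht : Function.Involutive t)
    (hft : t.invSet.Finite) : (v * t).invSet.Finite ↔ v.invSet.Finite := by
  rw [← image_sortPair_symmDiff v ht, finite_image_iff (injOn_sortPair_symmDiff v ht)]
  exact ⟨fun h => (h.union hft).subset (le_symmDiff_sup_right _ _),
    fun h => (h.union hft).subset symmDiff_le_sup⟩

theorem invSet_swap (hab : a < b) :
    (swap a b).invSet = {a} ×ˢ Ioc a b ∪ Ioo a b ×ˢ {b} := by
  ext ⟨p, q⟩
  simp only [invSet, swap_apply_def, mem_ofPred_eq, mem_union, mem_prod, mem_singleton_iff,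
    mem_Ioc, mem_Ioo]
  split_ifs <;> omega

theorem finite_invSet_swap (hab : a < b) : (swap a b).invSet.Finite := by
  rw [invSet_swap hab]
  exact ((finite_singleton a).prod (finite_Ioc a b)).union
    ((finite_Ioo a b).prod (finite_singleton b))

theorem ncard_invSet_swap (hab : a < b) : (swap a b).invSet.ncard + 1 = 2 * (b - a) := by
  rw [invSet_swap hab, ncard_singleton_prod_union_prod_singleton (fun h => lt_irrefl a h.1)
    (finite_Ioc a b) (finite_Ioo a b), ncard_Ioc_nat, ncard_Ioo_nat]
  omega

theorem invSet_inter_invSet_swap (v : Perm ℕ) (hab : a < b) (hvab : v a < v b) :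
    v.invSet ∩ (swap a b).invSet =
      {a} ×ˢ {m ∈ Ioo a b | v m < v a} ∪ {m ∈ Ioo a b | v b < v m} ×ˢ {b} := by
  rw [invSet_swap hab]
  ext ⟨p, q⟩
  simp only [invSet, mem_ofPred_eq, mem_inter_iff, mem_union, mem_prod,
    mem_singleton_iff, mem_Ioc, mem_Ioo]
  grind

theorem ncard_Ioo_eq_ncard_sep_add_ncard_sep_add_ncard_sep (v : Perm ℕ) (hvab : v a < v b) :
    (Ioo a b).ncard = {m ∈ Ioo a b | v m < v a}.ncard + {m ∈ Ioo a b | v b < v m}.ncard +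
      {m ∈ Ioo a b | v a < v m ∧ v m < v b}.ncard := by
  have hfin : ∀ p : ℕ → Prop, {m ∈ Ioo a b | p m}.Finite := fun _ =>
    (finite_Ioo a b).subset (sep_subset _ _)
  have hsplit : Ioo a b = {m ∈ Ioo a b | v m < v a} ∪ {m ∈ Ioo a b | v b < v m} ∪
      {m ∈ Ioo a b | v a < v m ∧ v m < v b} := by
    ext m
    simp only [mem_union, mem_ofPred_eq, mem_Ioo]
    have hma : v m = v a ↔ m = a := v.injective.eq_iff
    have hmb : v m = v b ↔ m = b := v.injective.eq_iff
    constructor <;> intro <;> omega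
  have hdisj₁ : _root_.Disjoint {m ∈ Ioo a b | v m < v a} {m ∈ Ioo a b | v b < v m} :=
    Set.disjoint_left.2 fun m h₁ h₂ => by have := h₁.2; have := h₂.2; omega
  have hdisj₂ : _root_.Disjoint ({m ∈ Ioo a b | v m < v a} ∪ {m ∈ Ioo a b | v b < v m})
      {m ∈ Ioo a b | v a < v m ∧ v m < v b} :=
    Set.disjoint_left.2 fun m h₁ h₂ => by
      rcases h₁ with h₁ | h₁ <;> have := h₁.2 <;> have := h₂.2 <;> omega
  conv_lhs => rw [hsplit]
  rw [ncard_union_eq hdisj₂ ((hfin _).union (hfin _)) (hfin _),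
    ncard_union_eq hdisj₁ (hfin _) (hfin _)]

theorem len_mul_swap_of_lt (v : Perm ℕ) (hab : a < b) (hv : v.invSet.Finite) (hvab : v a < v b) :
    len (v * swap a b) = len v + 1 + 2 * {m ∈ Ioo a b | v a < v m ∧ v m < v b}.ncard := by
  have hsymm := ncard_symmDiff_add_two_mul_ncard_inter hv (finite_invSet_swap hab)
  rw [invSet_inter_invSet_swap v hab hvab, ncard_singleton_prod_union_prod_singleton
    (fun h => lt_irrefl a h.1.1) ((finite_Ioo a b).subset (sep_subset _ _))
    ((finite_Ioo a b).subset (sep_subset _ _))] at hsymm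
  have hswap := ncard_invSet_swap hab
  have hIoo := ncard_Ioo_eq_ncard_sep_add_ncard_sep_add_ncard_sep v hvab
  rw [ncard_Ioo_nat] at hIoo
  rw [len_eq_ncard_invSet, len_eq_ncard_invSet, ncard_invSet_mul v (swap_apply_self a b)]
  omega

theorem mul_swap_apply_of_ne (v : Perm ℕ) {m : ℕ} (ha : m ≠ a) (hb : m ≠ b) :
    (v * swap a b) m = v m := by
  rw [mul_apply, swap_apply_of_ne_of_ne ha hb]

theorem finite_invSet_mul_swap {v : Perm ℕ} (hab : a < b) (hv : v.invSet.Finite) :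
    (v * swap a b).invSet.Finite :=
  (finite_invSet_mul_iff v (swap_apply_self a b) (finite_invSet_swap hab)).2 hv

/-- `len` is `0` on permutations with infinitely many inversions, so a cover forces finiteness. -/
theorem finite_invSet_of_len_mul_swap_eq_add_one {v : Perm ℕ} (hab : a < b)
    (h : len (v * swap a b) = len v + 1) : v.invSet.Finite := by
  by_contra hinf
  have hinf' : (v * swap a b).invSet.Infinite :=
    mt (finite_invSet_mul_iff v (swap_apply_self a b) (finite_invSet_swap hab)).1 hinf
  rw [len_eq_ncard_invSet, len_eq_ncard_invSet, Set.Infinite.ncard hinf, hinf'.ncard] at h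
  omega

theorem len_mul_swap_eq_add_one_iff {v : Perm ℕ} (hab : a < b) (hv : v.invSet.Finite) :
    len (v * swap a b) = len v + 1 ↔
      v a < v b ∧ ∀ m ∈ Ioo a b, ¬(v a < v m ∧ v m < v b) := by
  constructor
  · intro h
    have hvab : v a < v b := by
      by_contra hba
      have hlt : (v * swap a b) a < (v * swap a b) b := by
        simpa using lt_of_le_of_ne (not_lt.1 hba) (v.injective.ne hab.ne')
      have h' := len_mul_swap_of_lt _ hab (finite_invSet_mul_swap hab hv) hlt
      rw [mul_assoc, swap_mul_self, mul_one] at h'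
      omega
    refine ⟨hvab, fun m hm hmid => ?_⟩
    have h' := len_mul_swap_of_lt v hab hv hvab
    rw [h', add_eq_left, mul_eq_zero,
      ncard_eq_zero ((finite_Ioo a b).subset (sep_subset _ _))] at h
    exact (h.resolve_left two_ne_zero).subset ⟨hm, hmid⟩
  · rintro ⟨hvab, hmid⟩
    rw [len_mul_swap_of_lt v hab hv hvab, sep_eq_empty_iff_mem_false.2 hmid, ncard_empty]

end Equiv.Perm

theorem covTrans_iff {v : Equiv.Perm ℕ} {a b : ℕ} (hv : v.invSet.Finite) :
    covTrans v a b ↔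
      0 < a ∧ a < b ∧ v a < v b ∧ ∀ m ∈ Set.Ioo a b, ¬(v a < v m ∧ v m < v b) :=
  ⟨fun ⟨ha, hab, h⟩ => ⟨ha, hab, (Equiv.Perm.len_mul_swap_eq_add_one_iff hab hv).1 h⟩,
    fun ⟨ha, hab, h⟩ => ⟨ha, hab, (Equiv.Perm.len_mul_swap_eq_add_one_iff hab hv).2 h⟩⟩

theorem Equiv.swap_mul_swap_eq_swap_mul_swap {α : Type*} [DecidableEq α] {j k l : α}
    (hkl : k ≠ l) (hjl : j ≠ l) :
    Equiv.swap j k * Equiv.swap k l = Equiv.swap j l * Equiv.swap j k := by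
  rw [← Equiv.swap_mul_swap_mul_swap hjl.symm hkl.symm, ← mul_assoc, ← mul_assoc,
    swap_mul_self, one_mul, swap_comm]

open Equiv Equiv.Perm in
/-- Intertwining relation 2(b): if `j < k < l` and `v ⋖ v(j,l) ⋖ v(j,l)(j,k) = w` is a
saturated chain in Bruhat order, then `v ⋖ v(j,k) ⋖ v(j,k)(k,l) = w` is also a saturated
chain from `v` to `w`. -/
theorem intertwine_2b (v : Equiv.Perm ℕ) (j k l : ℕ) (hjk : j < k) (hkl : k < l)
    (c1 : covTrans v j l) (c2 : covTrans (v * Equiv.swap j l) j k) :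
    covTrans v j k ∧ covTrans (v * Equiv.swap j k) k l ∧
      v * Equiv.swap j k * Equiv.swap k l = v * Equiv.swap j l * Equiv.swap j k := by
  have hv := finite_invSet_of_len_mul_swap_eq_add_one c1.2.1 c1.2.2
  rw [covTrans_iff hv] at c1
  rw [covTrans_iff (finite_invSet_mul_swap (hjk.trans hkl) hv)] at c2
  rw [covTrans_iff hv, covTrans_iff (finite_invSet_mul_swap hjk hv)]
  obtain ⟨hj, -, hjl, hgap_jl⟩ := c1
  obtain ⟨-, -, hlk, hgap_jk⟩ := c2
  rw [mul_apply, swap_apply_left, mul_swap_apply_of_ne v hjk.ne' hkl.ne] at hlk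
  have hgap_lk : ∀ m ∈ Set.Ioo j k, ¬(v l < v m ∧ v m < v k) := fun m hm => by
    simpa [mul_swap_apply_of_ne v hm.1.ne' (hm.2.trans hkl).ne,
      mul_swap_apply_of_ne v hjk.ne' hkl.ne] using hgap_jk m hm
  have hxk : (v * swap j k) k = v j := by rw [mul_apply, swap_apply_right]
  have hxl : (v * swap j k) l = v l := mul_swap_apply_of_ne v (hjk.trans hkl).ne' hkl.ne'
  refine ⟨⟨hj, hjk, hjl.trans hlk, fun m hm hmid => ?_⟩,
    ⟨hj.trans hjk, hkl, hxk ▸ hxl ▸ hjl, fun m hm hmid => ?_⟩, ?_⟩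
  · rcases lt_or_gt_of_ne (v.injective.ne (hm.2.trans hkl).ne) with h | h
    · exact hgap_jl m ⟨hm.1, hm.2.trans hkl⟩ ⟨hmid.1, h⟩
    · exact hgap_lk m hm ⟨h, hmid.2⟩
  · rw [hxk, hxl, mul_swap_apply_of_ne v (hjk.trans hm.1).ne' hm.1.ne'] at hmid
    exact hgap_jl m ⟨hjk.trans hm.1, hm.2⟩ hmid
  · rw [mul_assoc, mul_assoc, swap_mul_swap_eq_swap_mul_swap hkl.ne (hjk.trans hkl).ne]

end
end

section
/- Suppose j < k < l and v ⋖ v(j,l) ⋖ v(j,l)(k,l) = w is a saturated chain of length two in the Bruhat order from v to w. Then v ⋖ v(k,l) ⋖ v(k,l)(j,k) = w is also a saturated chain in the Bruhat order from v to w. -/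
noncomputable section

namespace Intertwine

open Equiv Set

def Invs (v : Equiv.Perm ℕ) : Set (ℕ × ℕ) := {p | p.1 < p.2 ∧ v p.2 < v p.1}

lemma len_def (v : Equiv.Perm ℕ) : len v = (Invs v).ncard := rfl

/-- pairs whose order is reversed by `swap x y` -/
def SS (x y : ℕ) : Set (ℕ × ℕ) :=
  {p | p.1 < p.2 ∧ Equiv.swap x y p.2 < Equiv.swap x y p.1}

lemma mem_SS {x y p q : ℕ} (hxy : x < y) :
    (p, q) ∈ SS x y ↔ (p = x ∧ x < q ∧ q ≤ y) ∨ (x < p ∧ p < y ∧ q = y) := by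
  simp only [SS, Set.mem_setOf_eq, Equiv.swap_apply_def]
  split_ifs <;> omega

lemma SS_finite (x y : ℕ) (hxy : x < y) : (SS x y).Finite := by
  apply Set.Finite.subset ((Set.finite_Icc x y).prod (Set.finite_Icc x y))
  rintro ⟨p, q⟩ h
  rw [mem_SS hxy] at h
  simp only [Set.mem_prod, Set.mem_Icc]
  omega

def FF (x y : ℕ) (p : ℕ × ℕ) : ℕ × ℕ :=
  if Equiv.swap x y p.1 < Equiv.swap x y p.2 then (Equiv.swap x y p.1, Equiv.swap x y p.2)
  else (Equiv.swap x y p.2, Equiv.swap x y p.1)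

lemma FF_step (w : Equiv.Perm ℕ) (x y : ℕ) {p : ℕ × ℕ}
    (hp : p ∈ Invs (w * Equiv.swap x y) \ SS x y) :
    FF x y p ∈ Invs w \ SS x y ∧ FF x y (FF x y p) = p := by
  obtain ⟨p, q⟩ := p
  obtain ⟨⟨hpq, hv⟩, hS⟩ := hp
  simp only [SS, Set.mem_setOf_eq, not_and, not_lt] at hS
  have hne : Equiv.swap x y p ≠ Equiv.swap x y q := fun h =>
    Nat.ne_of_lt hpq ((Equiv.swap x y).injective h)
  have hlt : Equiv.swap x y p < Equiv.swap x y q := lt_of_le_of_ne (hS hpq) hne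
  have hFF : FF x y (p, q) = (Equiv.swap x y p, Equiv.swap x y q) := by
    simp only [FF, hlt, if_pos]
  refine ⟨⟨⟨?_, ?_⟩, ?_⟩, ?_⟩
  · rw [hFF]; exact hlt
  · rw [hFF]
    simpa [Equiv.Perm.mul_apply] using hv
  · rw [hFF]
    simp only [SS, Set.mem_setOf_eq, Equiv.swap_apply_self, not_and, not_lt]
    intro _
    exact hpq.le
  · rw [hFF]
    simp only [FF, Equiv.swap_apply_self]
    simp [hpq]

lemma swap_cancel (v : Equiv.Perm ℕ) (x y : ℕ) :
    v * Equiv.swap x y * Equiv.swap x y = v := by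
  rw [mul_assoc, Equiv.swap_mul_self, mul_one]

lemma FF_image (v : Equiv.Perm ℕ) (x y : ℕ) :
    FF x y '' (Invs (v * Equiv.swap x y) \ SS x y) = Invs v \ SS x y := by
  apply Set.Subset.antisymm
  · rintro _ ⟨p, hp, rfl⟩
    exact (FF_step v x y hp).1
  · intro q hq
    have hq' : q ∈ Invs (v * Equiv.swap x y * Equiv.swap x y) \ SS x y := by
      rwa [swap_cancel]
    obtain ⟨h1, h2⟩ := FF_step (v * Equiv.swap x y) x y hq'
    exact ⟨FF x y q, h1, h2⟩

lemma FF_injOn (v : Equiv.Perm ℕ) (x y : ℕ) :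
    Set.InjOn (FF x y) (Invs (v * Equiv.swap x y) \ SS x y) := by
  intro p hp q hq h
  rw [← (FF_step v x y hp).2, ← (FF_step v x y hq).2, h]

lemma ncard_off (v : Equiv.Perm ℕ) (x y : ℕ) :
    ((Invs (v * Equiv.swap x y)) \ SS x y).ncard = ((Invs v) \ SS x y).ncard := by
  rw [← FF_image v x y, Set.ncard_image_of_injOn (FF_injOn v x y)]

lemma invs_mul_finite {v : Equiv.Perm ℕ} {x y : ℕ} (hxy : x < y)
    (hfin : (Invs v).Finite) : (Invs (v * Equiv.swap x y)).Finite := by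
  have h1 : ((Invs (v * Equiv.swap x y)) \ SS x y).Finite := by
    apply Set.Finite.of_finite_image _ (FF_injOn v x y)
    rw [FF_image v x y]
    exact hfin.subset Set.diff_subset
  have : Invs (v * Equiv.swap x y) ⊆
      ((Invs (v * Equiv.swap x y)) \ SS x y) ∪ SS x y := by
    intro p hp
    by_cases h : p ∈ SS x y
    · exact Or.inr h
    · exact Or.inl ⟨hp, h⟩
  exact (h1.union (SS_finite x y hxy)).subset this

def Mset (v : Equiv.Perm ℕ) (x y : ℕ) : Set ℕ :=
  {z | x < z ∧ z < y ∧ v x < v z ∧ v z < v y}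

lemma Mset_finite (v : Equiv.Perm ℕ) (x y : ℕ) : (Mset v x y).Finite :=
  (Set.finite_Ioo x y).subset fun z hz => ⟨hz.1, hz.2.1⟩

lemma sub_finite (x y : ℕ) (P : ℕ → Prop) :
    {z | x < z ∧ z < y ∧ P z}.Finite :=
  (Set.finite_Ioo x y).subset fun z hz => ⟨hz.1, hz.2.1⟩

lemma invs_inter_SS {v : Equiv.Perm ℕ} {x y : ℕ} (hxy : x < y) (hv : v x < v y) :
    Invs v ∩ SS x y =
      (fun z => (x, z)) '' {z | x < z ∧ z < y ∧ v z < v x} ∪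
      (fun z => (z, y)) '' {z | x < z ∧ z < y ∧ v y < v z} := by
  ext ⟨p, q⟩
  simp only [Set.mem_inter_iff, mem_SS hxy, Invs, Set.mem_setOf_eq, Set.mem_union,
    Set.mem_image, Prod.mk.injEq]
  constructor
  · rintro ⟨⟨hpq, hval⟩, ⟨rfl, hq1, hq2⟩ | ⟨hp1, hp2, rfl⟩⟩
    · rcases eq_or_lt_of_le hq2 with rfl | h
      · exact absurd hval (not_lt.mpr hv.le)
      · exact Or.inl ⟨q, ⟨hq1, h, hval⟩, rfl, rfl⟩
    · exact Or.inr ⟨p, ⟨hp1, hp2, hval⟩, rfl, rfl⟩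
  · rintro (⟨z, ⟨hz1, hz2, hz3⟩, rfl, rfl⟩ | ⟨z, ⟨hz1, hz2, hz3⟩, rfl, rfl⟩)
    · exact ⟨⟨hz1, hz3⟩, Or.inl ⟨rfl, hz1, hz2.le⟩⟩
    · exact ⟨⟨hz2, hz3⟩, Or.inr ⟨hz1, hz2, rfl⟩⟩

lemma invs_swap_inter_SS {v : Equiv.Perm ℕ} {x y : ℕ} (hxy : x < y) (hv : v x < v y) :
    Invs (v * Equiv.swap x y) ∩ SS x y =
      insert (x, y)
        ((fun z => (x, z)) '' {z | x < z ∧ z < y ∧ v z < v y} ∪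
         (fun z => (z, y)) '' {z | x < z ∧ z < y ∧ v x < v z}) := by
  have hval : ∀ z, x < z → z < y → (v * Equiv.swap x y) z = v z := fun z h1 h2 => by
    simp [Equiv.Perm.mul_apply,
      Equiv.swap_apply_of_ne_of_ne (Nat.ne_of_gt h1) (Nat.ne_of_lt h2)]
  have hvx : (v * Equiv.swap x y) x = v y := by simp [Equiv.Perm.mul_apply]
  have hvy : (v * Equiv.swap x y) y = v x := by simp [Equiv.Perm.mul_apply]
  ext ⟨p, q⟩
  simp only [Set.mem_inter_iff, mem_SS hxy, Invs, Set.mem_setOf_eq, Set.mem_insert_iff,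
    Set.mem_union, Set.mem_image, Prod.mk.injEq]
  constructor
  · rintro ⟨⟨hpq, hvpq⟩, ⟨rfl, hq1, hq2⟩ | ⟨hp1, hp2, rfl⟩⟩
    · rcases eq_or_lt_of_le hq2 with rfl | h
      · exact Or.inl ⟨rfl, rfl⟩
      · rw [hvx, hval q hq1 h] at hvpq
        exact Or.inr (Or.inl ⟨q, ⟨hq1, h, hvpq⟩, rfl, rfl⟩)
    · rw [hvy, hval p hp1 hp2] at hvpq
      exact Or.inr (Or.inr ⟨p, ⟨hp1, hp2, hvpq⟩, rfl, rfl⟩)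
  · rintro (⟨rfl, rfl⟩ | ⟨z, ⟨hz1, hz2, hz3⟩, rfl, rfl⟩ | ⟨z, ⟨hz1, hz2, hz3⟩, rfl, rfl⟩)
    · exact ⟨⟨hxy, by rw [hvx, hvy]; exact hv⟩, Or.inl ⟨rfl, hxy, le_refl _⟩⟩
    · exact ⟨⟨hz1, by rw [hvx, hval z hz1 hz2]; exact hz3⟩, Or.inl ⟨rfl, hz1, hz2.le⟩⟩
    · exact ⟨⟨hz2, by rw [hvy, hval z hz1 hz2]; exact hz3⟩, Or.inr ⟨hz1, hz2, rfl⟩⟩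

lemma inj_left (x : ℕ) : Function.Injective (fun z : ℕ => (x, z)) := by
  intro a b h; simpa using h

lemma inj_right (y : ℕ) : Function.Injective (fun z : ℕ => (z, y)) := by
  intro a b h; simpa using h

lemma ncard_pair_union (x y : ℕ) (P Q : ℕ → Prop) :
    ((fun z => (x, z)) '' {z | x < z ∧ z < y ∧ P z} ∪
     (fun z => (z, y)) '' {z | x < z ∧ z < y ∧ Q z}).ncard =
    {z | x < z ∧ z < y ∧ P z}.ncard + {z | x < z ∧ z < y ∧ Q z}.ncard := by
  rw [Set.ncard_union_eq ?disj (((sub_finite x y P).image _))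
      (((sub_finite x y Q).image _)),
    Set.ncard_image_of_injective _ (inj_left x), Set.ncard_image_of_injective _ (inj_right y)]
  case disj =>
    rw [Set.disjoint_left]
    rintro p ⟨z, hz, rfl⟩ ⟨z', ⟨hz1, hz2, _⟩, h⟩
    simp only [Prod.mk.injEq] at h
    omega

lemma split_lt {v : Equiv.Perm ℕ} {x y : ℕ} (hv : v x < v y) :
    {z | x < z ∧ z < y ∧ v z < v y}.ncard =
      {z | x < z ∧ z < y ∧ v z < v x}.ncard + (Mset v x y).ncard := by
  rw [← Set.ncard_union_eq ?disj (sub_finite x y _) (Mset_finite v x y)]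
  · congr 1
    ext z
    simp only [Set.mem_setOf_eq, Set.mem_union, Mset]
    constructor
    · rintro ⟨h1, h2, h3⟩
      by_cases h : v z < v x
      · exact Or.inl ⟨h1, h2, h⟩
      · refine Or.inr ⟨h1, h2, lt_of_le_of_ne (not_lt.mp h) ?_, h3⟩
        exact fun he => absurd (v.injective he) (by omega)
    · rintro (⟨h1, h2, h3⟩ | ⟨h1, h2, h3, h4⟩)
      · exact ⟨h1, h2, h3.trans hv⟩
      · exact ⟨h1, h2, h4⟩
  case disj =>
    rw [Set.disjoint_left]
    rintro z ⟨_, _, h⟩ ⟨_, _, h', _⟩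
    exact absurd h' (lt_asymm h)

lemma split_gt {v : Equiv.Perm ℕ} {x y : ℕ} (hv : v x < v y) :
    {z | x < z ∧ z < y ∧ v x < v z}.ncard =
      {z | x < z ∧ z < y ∧ v y < v z}.ncard + (Mset v x y).ncard := by
  rw [← Set.ncard_union_eq ?disj (sub_finite x y _) (Mset_finite v x y)]
  · congr 1
    ext z
    simp only [Set.mem_setOf_eq, Set.mem_union, Mset]
    constructor
    · rintro ⟨h1, h2, h3⟩
      by_cases h : v y < v z
      · exact Or.inl ⟨h1, h2, h⟩
      · refine Or.inr ⟨h1, h2, h3, lt_of_le_of_ne (not_lt.mp h) ?_⟩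
        exact fun he => absurd (v.injective he) (by omega)
    · rintro (⟨h1, h2, h3⟩ | ⟨h1, h2, h3, h4⟩)
      · exact ⟨h1, h2, hv.trans h3⟩
      · exact ⟨h1, h2, h3⟩
  case disj =>
    rw [Set.disjoint_left]
    rintro z ⟨_, _, h⟩ ⟨_, _, _, h'⟩
    exact absurd h' (lt_asymm h)

lemma ncard_on_S {v : Equiv.Perm ℕ} {x y : ℕ} (hxy : x < y) (hv : v x < v y) :
    (Invs (v * Equiv.swap x y) ∩ SS x y).ncard
      = (Invs v ∩ SS x y).ncard + 1 + 2 * (Mset v x y).ncard := by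
  rw [invs_inter_SS hxy hv, invs_swap_inter_SS hxy hv,
    Set.ncard_insert_of_notMem ?notmem ?fin, ncard_pair_union, ncard_pair_union,
    split_lt hv, split_gt hv]
  · ring
  case notmem =>
    rintro (⟨z, ⟨h1, h2, _⟩, h⟩ | ⟨z, ⟨h1, h2, _⟩, h⟩) <;>
      (simp only [Prod.mk.injEq] at h; omega)
  case fin =>
    exact ((sub_finite x y _).image _).union ((sub_finite x y _).image _)

lemma len_formula {v : Equiv.Perm ℕ} {x y : ℕ} (hxy : x < y)
    (hfin : (Invs v).Finite) (hv : v x < v y) :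
    len (v * Equiv.swap x y) = len v + 1 + 2 * (Mset v x y).ncard := by
  have hfin' := invs_mul_finite hxy hfin
  have d2 : Invs (v * Equiv.swap x y)
      = (Invs (v * Equiv.swap x y) \ SS x y) ∪ (Invs (v * Equiv.swap x y) ∩ SS x y) :=
    (Set.diff_union_inter _ _).symm
  have d1 : Invs v = (Invs v \ SS x y) ∪ (Invs v ∩ SS x y) :=
    (Set.diff_union_inter _ _).symm
  rw [len_def, len_def, d2,
    Set.ncard_union_eq Set.disjoint_sdiff_inter (hfin'.subset Set.diff_subset)
      (hfin'.subset Set.inter_subset_left),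
    ncard_off, ncard_on_S hxy hv]
  conv_rhs => rw [d1]
  rw [Set.ncard_union_eq Set.disjoint_sdiff_inter (hfin.subset Set.diff_subset)
      (hfin.subset Set.inter_subset_left)]
  ring

lemma cov_char {v : Equiv.Perm ℕ} {x y : ℕ} (hxy : x < y) (hx : 0 < x) :
    covTrans v x y ↔ (Invs v).Finite ∧ v x < v y ∧ Mset v x y = ∅ := by
  constructor
  · rintro ⟨-, -, hlen⟩
    have hfin : (Invs v).Finite := by
      by_contra hinf
      have hinf' : ¬ (Invs (v * Equiv.swap x y)).Finite := fun h => by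
        have h2 := invs_mul_finite hxy h
        rw [swap_cancel] at h2
        exact hinf h2
      have e1 : len v = 0 := Set.Infinite.ncard hinf
      have e2 : len (v * Equiv.swap x y) = 0 := Set.Infinite.ncard hinf'
      omega
    have hv : v x < v y := by
      rcases lt_trichotomy (v x) (v y) with h | h | h
      · exact h
      · exact absurd (v.injective h) (Nat.ne_of_lt hxy)
      · exfalso
        have hfin' := invs_mul_finite hxy hfin
        have hv' : (v * Equiv.swap x y) x < (v * Equiv.swap x y) y := by
          simp only [Equiv.Perm.mul_apply, Equiv.swap_apply_left, Equiv.swap_apply_right]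
          exact h
        have h2 := len_formula hxy hfin' hv'
        rw [swap_cancel, hlen] at h2
        omega
    refine ⟨hfin, hv, ?_⟩
    have h2 := len_formula hxy hfin hv
    rw [hlen] at h2
    have hM : (Mset v x y).ncard = 0 := by omega
    exact (Set.ncard_eq_zero (Mset_finite v x y)).mp hM
  · rintro ⟨hfin, hv, hM⟩
    refine ⟨hx, hxy, ?_⟩
    rw [len_formula hxy hfin hv, hM, Set.ncard_empty]

lemma mset_eq_empty {v : Equiv.Perm ℕ} {x y : ℕ}
    (h : ∀ z, x < z → z < y → v x < v z → ¬ v z < v y) : Mset v x y = ∅ :=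
  Set.eq_empty_iff_forall_notMem.mpr fun z hz => h z hz.1 hz.2.1 hz.2.2.1 hz.2.2.2

lemma mset_forall {v : Equiv.Perm ℕ} {x y : ℕ} (h : Mset v x y = ∅) :
    ∀ z, x < z → z < y → v x < v z → ¬ v z < v y :=
  fun z h1 h2 h3 h4 => Set.eq_empty_iff_forall_notMem.mp h z ⟨h1, h2, h3, h4⟩

end Intertwine

open Intertwine in
/-- Intertwining relation 2(c): if `j < k < l` and `v ⋖ v(j,l) ⋖ v(j,l)(k,l) = w` is a
saturated chain in Bruhat order, then `v ⋖ v(k,l) ⋖ v(k,l)(j,k) = w` is also a saturated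
chain from `v` to `w`. -/
theorem intertwine_2c (v : Equiv.Perm ℕ) (j k l : ℕ) (hjk : j < k) (hkl : k < l)
    (c1 : covTrans v j l) (c2 : covTrans (v * Equiv.swap j l) k l) :
    covTrans v k l ∧ covTrans (v * Equiv.swap k l) j k ∧
      v * Equiv.swap k l * Equiv.swap j k = v * Equiv.swap j l * Equiv.swap k l := by
  have hjl : j < l := hjk.trans hkl
  have hj : 0 < j := c1.1
  have hk : 0 < k := hj.trans hjk
  obtain ⟨hfin, hvjl, hM1⟩ := (cov_char hjl hj).mp c1
  have ek : (v * Equiv.swap j l) k = v k := by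
    simp [Equiv.Perm.mul_apply,
      Equiv.swap_apply_of_ne_of_ne (Nat.ne_of_gt hjk) (Nat.ne_of_lt hkl)]
  have el : (v * Equiv.swap j l) l = v j := by simp [Equiv.Perm.mul_apply]
  obtain ⟨hfin2, hvkl', hM2⟩ := (cov_char hkl hk).mp c2
  rw [ek, el] at hvkl'
  have h1 := mset_forall hM1
  have h2' := mset_forall hM2
  have h2 : ∀ z, k < z → z < l → v k < v z → ¬ v z < v j := by
    intro z hz1 hz2 h3 h4
    have ez : (v * Equiv.swap j l) z = v z := by
      simp [Equiv.Perm.mul_apply,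
        Equiv.swap_apply_of_ne_of_ne (by omega : z ≠ j) (Nat.ne_of_lt hz2)]
    exact h2' z hz1 hz2 (by rw [ek, ez]; exact h3) (by rw [ez, el]; exact h4)
  have cA : covTrans v k l := by
    rw [cov_char hkl hk]
    refine ⟨hfin, hvkl'.trans hvjl, mset_eq_empty ?_⟩
    intro z hz1 hz2 h3 h4
    by_cases hzj : v z < v j
    · exact h2 z hz1 hz2 h3 hzj
    · have hjz : v j < v z := lt_of_le_of_ne (not_lt.mp hzj)
        (fun he => absurd (v.injective he.symm) (by omega))
      exact h1 z (by omega) hz2 hjz h4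
  have ekj : (v * Equiv.swap k l) j = v j := by
    simp [Equiv.Perm.mul_apply,
      Equiv.swap_apply_of_ne_of_ne (Nat.ne_of_lt hjk) (Nat.ne_of_lt hjl)]
  have ekk : (v * Equiv.swap k l) k = v l := by simp [Equiv.Perm.mul_apply]
  have cB : covTrans (v * Equiv.swap k l) j k := by
    rw [cov_char hjk hj]
    refine ⟨invs_mul_finite hkl hfin, by rw [ekj, ekk]; exact hvjl, mset_eq_empty ?_⟩
    intro z hz1 hz2 h3 h4
    have ez : (v * Equiv.swap k l) z = v z := by
      simp [Equiv.Perm.mul_apply,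
        Equiv.swap_apply_of_ne_of_ne (Nat.ne_of_lt hz2) (by omega : z ≠ l)]
    rw [ekj, ez] at h3
    rw [ez, ekk] at h4
    exact h1 z (by omega) (by omega) h3 h4
  refine ⟨cA, cB, ?_⟩
  rw [mul_assoc, mul_assoc]
  congr 1
  ext z
  simp only [Equiv.Perm.mul_apply, Equiv.swap_apply_def]
  split_ifs <;> omega

end
end

section
/- If v ⋖ v(a,b) ⋖ v(a,b)(c,d) is a saturated chain of length two in the Bruhat order with a, b, c, d pairwise distinct positions, then v ⋖ v(c,d) ⋖ v(c,d)(a,b) is also a saturated chain in the Bruhat order (necessarily with the same endpoint, since disjoint transpositions commute). -/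
noncomputable section

/-!
Write `σ` for the map sending a pair of positions `i < j` to the sorted pair
`{(a b) i, (a b) j}`. Then `Inv (v (a b)) = σ (Inv v) ∆ Inv (a b)`, and since `σ` is an
involution preserving `Inv (a b)`, counting gives
`ℓ(v (a b)) + 2 |Inv v ∩ Inv (a b)| = ℓ(v) + 2 #(a, b) + 1` for `a < b`. Splitting
`Inv (a b)` into `(a, b)` and the pairs `(a, k)`, `(k, b)` with `a < k < b` shows that
`v ⋖ v (a b)` exactly when `v a < v b` and no position strictly between `a` and `b` carries a
value strictly between `v a` and `v b`. For disjoint transpositions this criterion for the two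
steps of one chain gives it for the two steps of the other, by a case analysis on the relative
positions of `a, b, c, d`.
-/

open Equiv Finset
open scoped symmDiff

namespace Equiv.Perm

def inversions (v : Perm ℕ) : Set (ℕ × ℕ) := {p | p.1 < p.2 ∧ v p.2 < v p.1}

lemma len_eq_ncard_inversions (v : Perm ℕ) : len v = v.inversions.ncard := rfl

def sortedSwap (a b : ℕ) (p : ℕ × ℕ) : ℕ × ℕ :=
  (min (swap a b p.1) (swap a b p.2), max (swap a b p.1) (swap a b p.2))

variable {a b : ℕ} {p : ℕ × ℕ}

lemma sortedSwap_lt (h : p.1 < p.2) : (sortedSwap a b p).1 < (sortedSwap a b p).2 := by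
  have := (swap a b).injective.ne h.ne
  simp only [sortedSwap]
  omega

lemma sortedSwap_sortedSwap (h : p.1 < p.2) : sortedSwap a b (sortedSwap a b p) = p := by
  obtain ⟨x, y⟩ := p
  ext <;> simp only [sortedSwap, swap_apply_def] at h ⊢ <;> split_ifs <;> omega

lemma injOn_sortedSwap : Set.InjOn (sortedSwap a b) {p | p.1 < p.2} := fun p hp q hq h => by
  rw [← sortedSwap_sortedSwap (a := a) (b := b) hp, h, sortedSwap_sortedSwap hq]

lemma mem_image_sortedSwap {S : Set (ℕ × ℕ)} (hS : S ⊆ {q | q.1 < q.2}) (h : p.1 < p.2) :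
    p ∈ sortedSwap a b '' S ↔ sortedSwap a b p ∈ S :=
  ⟨by rintro ⟨q, hq, rfl⟩; rwa [sortedSwap_sortedSwap (hS hq)],
    fun hp => ⟨_, hp, sortedSwap_sortedSwap h⟩⟩

lemma inversions_mul_swap (v : Perm ℕ) :
    (v * swap a b).inversions = (sortedSwap a b '' v.inversions) ∆ (swap a b).inversions := by
  ext p
  by_cases hp : p.1 < p.2
  · rw [Set.mem_symmDiff, mem_image_sortedSwap (fun _ hq => hq.1) hp]
    have hne := (swap a b).injective.ne hp.ne
    have hvne := v.injective.ne hne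
    simp only [inversions, sortedSwap, Set.mem_ofPred_eq, Perm.mul_apply, hp, true_and]
    rcases hne.lt_or_gt with h | h
    · simp only [min_eq_left h.le, max_eq_right h.le, h, h.not_gt, true_and, not_false_eq_true,
        and_true, not_lt, false_and, or_false]
    · simp only [min_eq_right h.le, max_eq_left h.le, h, true_and, not_true_eq_false, and_false,
        not_lt, false_or]
      omega
  · have hnot (w : Perm ℕ) : p ∉ w.inversions := fun h => hp h.1
    have hnot' : p ∉ sortedSwap a b '' v.inversions := by
      rintro ⟨q, hq, rfl⟩
      exact hp (sortedSwap_lt hq.1)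
    simp [Set.mem_symmDiff, hnot, hnot']

lemma mem_inversions_swap (hab : a < b) : p ∈ (swap a b).inversions ↔
    p = (a, b) ∨ ∃ k ∈ Ioo a b, p = (a, k) ∨ p = (k, b) := by
  obtain ⟨x, y⟩ := p
  simp only [inversions, swap_apply_def, Set.mem_ofPred_eq, mem_Ioo, Prod.mk.injEq]
  constructor
  · intro h
    by_cases hx : x = a
    · by_cases hy : y = b
      · exact Or.inl ⟨hx, hy⟩
      · refine Or.inr ⟨y, ?_, Or.inl ⟨hx, rfl⟩⟩
        split_ifs at h <;> omega
    · refine Or.inr ⟨x, ?_, Or.inr ⟨rfl, ?_⟩⟩ <;> split_ifs at h <;> omega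
  · rintro (⟨rfl, rfl⟩ | ⟨k, hk, ⟨rfl, rfl⟩ | ⟨rfl, rfl⟩⟩) <;> split_ifs <;> omega

lemma inversions_swap (hab : a < b) :
    (swap a b).inversions = ↑(insert (a, b) ((Ioo a b).biUnion fun k => {(a, k), (k, b)})) := by
  ext p
  simp [mem_inversions_swap hab]

lemma finite_inversions_swap (hab : a < b) : (swap a b).inversions.Finite := by
  rw [inversions_swap hab]
  exact finite_toSet _

lemma finite_inversions_mul_swap (hab : a < b) {v : Perm ℕ} (hfin : v.inversions.Finite) :
    (v * swap a b).inversions.Finite := by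
  rw [inversions_mul_swap]
  exact (hfin.image _).symmDiff (finite_inversions_swap hab)

open scoped Classical in
lemma ncard_inter_inversions_swap (X : Set (ℕ × ℕ)) (hab : a < b) :
    (X ∩ (swap a b).inversions).ncard = (if (a, b) ∈ X then 1 else 0) +
      ∑ k ∈ Ioo a b, ((if (a, k) ∈ X then 1 else 0) + (if (k, b) ∈ X then 1 else 0)) := by
  rw [inversions_swap hab, Set.inter_comm]
  set F := insert (a, b) ((Ioo a b).biUnion fun k => {(a, k), (k, b)})
  have hF : (↑F : Set (ℕ × ℕ)) ∩ X = ↑(F.filter (· ∈ X)) := by ext; simp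
  rw [hF, Set.ncard_coe_finset, card_filter, sum_insert, sum_biUnion]
  · congr 1
    refine sum_congr rfl fun k hk => sum_pair ?_
    simp only [mem_Ioo, ne_eq, Prod.mk.injEq, not_and] at hk ⊢
    omega
  · intro k hk l hl hkl
    simp only [coe_Ioo, Set.mem_Ioo] at hk hl
    simp only [Function.onFun, disjoint_insert_left, disjoint_singleton_left, mem_insert,
      mem_singleton, Prod.mk.injEq]
    omega
  · simp only [mem_biUnion, mem_Ioo, mem_insert, Prod.mk.injEq, true_and, mem_singleton, and_true,
      not_exists, not_and, not_or, and_imp]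
    omega

lemma len_swap (hab : a < b) : len (swap a b) = 2 * #(Ioo a b) + 1 := by
  classical
  rw [len_eq_ncard_inversions, ← Set.univ_inter (swap a b).inversions]
  simpa [sum_add_distrib, mul_comm, add_comm] using ncard_inter_inversions_swap _root_.Set.univ hab

lemma image_sortedSwap_inversions_swap :
    sortedSwap a b '' (swap a b).inversions = (swap a b).inversions := by
  have hmaps : Set.MapsTo (sortedSwap a b) (swap a b).inversions (swap a b).inversions := by
    intro p hp
    simp only [inversions, Set.mem_ofPred_eq, sortedSwap, min_eq_right hp.2.le,
      max_eq_left hp.2.le, swap_apply_self] at hp ⊢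
    exact ⟨hp.2, hp.1⟩
  exact hmaps.image_subset.antisymm fun p hp => ⟨_, hmaps hp, sortedSwap_sortedSwap hp.1⟩

lemma len_mul_swap_add (v : Perm ℕ) (hab : a < b) (hfin : v.inversions.Finite) :
    len (v * swap a b) + 2 * (v.inversions ∩ (swap a b).inversions).ncard =
      len v + len (swap a b) := by
  rw [len_eq_ncard_inversions (swap a b)]
  set R := (swap a b).inversions
  set X := sortedSwap a b '' v.inversions
  have hinj : Set.InjOn (sortedSwap a b) (v.inversions ∪ R) :=
    injOn_sortedSwap.mono (Set.union_subset (fun _ hq => hq.1) fun _ hq => hq.1)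
  have hX : X.ncard = len v := (hinj.mono Set.subset_union_left).ncard_image
  have hXR : (X ∩ R).ncard = (v.inversions ∩ R).ncard := by
    have : X ∩ R = sortedSwap a b '' (v.inversions ∩ R) := by
      rw [hinj.image_inter Set.subset_union_left Set.subset_union_right,
        image_sortedSwap_inversions_swap]
    rw [this]
    exact (hinj.mono (Set.inter_subset_left.trans Set.subset_union_left)).ncard_image
  have hsymm : len (v * swap a b) = (X \ R).ncard + (R \ X).ncard := by
    rw [len_eq_ncard_inversions, inversions_mul_swap, Set.symmDiff_def]
    exact Set.ncard_union_eq disjoint_sdiff_sdiff (hfin.image _).sdiff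
      (finite_inversions_swap hab).sdiff
  have := Set.ncard_inter_add_ncard_sdiff_eq_ncard X R (hfin.image _)
  have := Set.ncard_inter_add_ncard_sdiff_eq_ncard R X (finite_inversions_swap hab)
  rw [Set.inter_comm R] at this
  omega

/-- The rectangle with corners `(a, v a)` and `(b, v b)` contains no other point of the graph
of `v`. -/
def IsEmptyRectAscent (v : Perm ℕ) (a b : ℕ) : Prop :=
  v a < v b ∧ ∀ k ∈ Ioo a b, v k < v a ∨ v b < v k

lemma ncard_inversions_inter_inversions_swap_eq_iff (v : Perm ℕ) (hab : a < b) :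
    (v.inversions ∩ (swap a b).inversions).ncard = #(Ioo a b) ↔ IsEmptyRectAscent v a b := by
  classical
  rw [ncard_inter_inversions_swap _ hab]
  have hne (k) (hk : k ∈ Ioo a b) : v k ≠ v a ∧ v k ≠ v b := by
    rw [mem_Ioo] at hk
    exact ⟨v.injective.ne (by omega), v.injective.ne (by omega)⟩
  have hterm (k) (hk : k ∈ Ioo a b) : ((if (a, k) ∈ v.inversions then 1 else 0) +
      (if (k, b) ∈ v.inversions then 1 else 0) : ℕ) =
      (if v k < v a then 1 else 0) + (if v b < v k then 1 else 0) := by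
    rw [mem_Ioo] at hk
    simp [inversions, hk]
  rw [sum_congr rfl hterm, card_eq_sum_ones]
  rcases (v.injective.ne hab.ne).lt_or_gt with h | h
  · have hle (k) (_ : k ∈ Ioo a b) :
        ((if v k < v a then 1 else 0) + (if v b < v k then 1 else 0) : ℕ) ≤ 1 := by
      split_ifs <;> omega
    simp only [inversions, Set.mem_ofPred_eq, hab, true_and, h.not_gt, if_false, zero_add,
      sum_eq_sum_iff_of_le hle, IsEmptyRectAscent, h]
    refine forall₂_congr fun k hk => ?_
    have := hne k hk
    split_ifs <;> omega
  · have hge : ∑ k ∈ Ioo a b, 1 ≤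
        ∑ k ∈ Ioo a b, ((if v k < v a then 1 else 0) + (if v b < v k then 1 else 0) : ℕ) :=
      sum_le_sum fun k hk => by have := hne k hk; split_ifs <;> omega
    simp only [inversions, Set.mem_ofPred_eq, hab, true_and, h, if_true, IsEmptyRectAscent,
      h.not_gt, false_and, iff_false]
    omega

lemma len_mul_swap_eq_succ_iff (v : Perm ℕ) (hab : a < b) (hfin : v.inversions.Finite) :
    len (v * swap a b) = len v + 1 ↔ IsEmptyRectAscent v a b := by
  have := len_mul_swap_add v hab hfin
  rw [len_swap hab] at this
  rw [← ncard_inversions_inter_inversions_swap_eq_iff v hab]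
  omega

lemma isEmptyRectAscent_comm {v : Perm ℕ} {a b c d : ℕ}
    (hab : a < b) (hcd : c < d) (hac : a ≠ c) (had : a ≠ d) (hbc : b ≠ c) (hbd : b ≠ d)
    (h₁ : IsEmptyRectAscent v a b) (h₂ : IsEmptyRectAscent (v * swap a b) c d) :
    IsEmptyRectAscent v c d ∧ IsEmptyRectAscent (v * swap c d) a b := by
  have hsc : swap a b c = c := swap_apply_of_ne_of_ne hac.symm hbc.symm
  have hsd : swap a b d = d := swap_apply_of_ne_of_ne had.symm hbd.symm
  have hsa : swap c d a = a := swap_apply_of_ne_of_ne hac had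
  have hsb : swap c d b = b := swap_apply_of_ne_of_ne hbc hbd
  simp only [IsEmptyRectAscent, mem_Ioo, Perm.mul_apply, hsc, hsd, hsa, hsb] at h₁ h₂ ⊢
  obtain ⟨hvab, h₁⟩ := h₁
  obtain ⟨hvcd, h₂⟩ := h₂
  have h₁c := h₁ c
  have h₁d := h₁ d
  have h₂a := h₂ a
  have h₂b := h₂ b
  rw [swap_apply_left] at h₂a
  rw [swap_apply_right] at h₂b
  have := v.injective.ne hac
  have := v.injective.ne had
  have := v.injective.ne hbc
  have := v.injective.ne hbd
  refine ⟨⟨hvcd, fun k hk => ?_⟩, ⟨hvab, fun k hk => ?_⟩⟩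
  · have := h₂ k hk
    rcases eq_or_ne k a with rfl | hka
    · omega
    rcases eq_or_ne k b with rfl | hkb
    · omega
    rwa [swap_apply_of_ne_of_ne hka hkb] at this
  · rcases eq_or_ne k c with rfl | hkc
    · rw [swap_apply_left]
      omega
    rcases eq_or_ne k d with rfl | hkd
    · rw [swap_apply_right]
      omega
    rw [swap_apply_of_ne_of_ne hkc hkd]
    exact h₁ k hk

end Equiv.Perm

open Equiv.Perm in
/-- Commutation: if `v ⋖ v(a,b) ⋖ v(a,b)(c,d)` is a saturated chain in Bruhat order with
`a, b, c, d` pairwise distinct positions, then `v ⋖ v(c,d) ⋖ v(c,d)(a,b)` is also a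
saturated chain, with the same endpoint since disjoint transpositions commute. -/
theorem commutation_disjoint (v : Equiv.Perm ℕ) (a b c d : ℕ)
    (hdist : a ≠ b ∧ a ≠ c ∧ a ≠ d ∧ b ≠ c ∧ b ≠ d ∧ c ≠ d)
    (c1 : covTrans v a b) (c2 : covTrans (v * Equiv.swap a b) c d) :
    covTrans v c d ∧ covTrans (v * Equiv.swap c d) a b ∧
      v * Equiv.swap c d * Equiv.swap a b = v * Equiv.swap a b * Equiv.swap c d := by
  obtain ⟨-, hac, had, hbc, hbd, -⟩ := hdist
  obtain ⟨ha, hab, hlen₁⟩ := c1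
  obtain ⟨hc, hcd, hlen₂⟩ := c2
  -- `ncard` of an infinite set is `0`, so a cover relation forces finitely many inversions.
  have hfin_ab : (v * swap a b).inversions.Finite :=
    Set.finite_of_ncard_ne_zero (by rw [← len_eq_ncard_inversions, hlen₁]; omega)
  have hfin : v.inversions.Finite := by
    simpa only [mul_swap_mul_self] using finite_inversions_mul_swap hab hfin_ab
  have hfin_cd := finite_inversions_mul_swap hcd hfin
  rw [len_mul_swap_eq_succ_iff v hab hfin] at hlen₁
  rw [len_mul_swap_eq_succ_iff _ hcd hfin_ab] at hlen₂
  obtain ⟨hv_cd, hv_cd_ab⟩ := isEmptyRectAscent_comm hab hcd hac had hbc hbd hlen₁ hlen₂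
  refine ⟨⟨hc, hcd, (len_mul_swap_eq_succ_iff v hcd hfin).2 hv_cd⟩,
    ⟨ha, hab, (len_mul_swap_eq_succ_iff _ hab hfin_cd).2 hv_cd_ab⟩, ?_⟩
  have hnodup : [c, d, a, b].Nodup := by
    simp [hab.ne, hcd.ne, hac.symm, had.symm, hbc.symm, hbd.symm]
  rw [mul_assoc, mul_assoc, (disjoint_swap_swap hnodup).commute.eq]

end
end

section
/- There cannot exist a permutation v and integers i < j ≤ k < l < m such that v ⋖ v(j,m), v(j,m) ⋖ v(j,m)(i,m), and v(j,m)(i,m) ⋖ v(j,m)(i,m)(i,l) are all covering relations in the Bruhat order. (Consequently a saturated chain of covers with transposition labels (j,m),(i,m),(i,l) satisfying i < j ≤ k < l < m is forbidden.) -/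
noncomputable section

namespace ForbiddenAux

open Set Equiv

/-- The inversion set of a permutation. -/
def Inv (v : Equiv.Perm ℕ) : Set (ℕ × ℕ) := {p : ℕ × ℕ | p.1 < p.2 ∧ v p.2 < v p.1}

lemma len_eq (v : Equiv.Perm ℕ) : len v = (Inv v).ncard := rfl

lemma mem_Inv {v : Equiv.Perm ℕ} {p q : ℕ} : (p, q) ∈ Inv v ↔ p < q ∧ v q < v p := Iff.rfl

lemma mem_Inv_w {v : Equiv.Perm ℕ} {a b p q : ℕ} (h1 : p < q)
    (h2 : v (Equiv.swap a b q) < v (Equiv.swap a b p)) :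
    (p, q) ∈ Inv (v * Equiv.swap a b) := ⟨h1, h2⟩

lemma inv_finite {v : Equiv.Perm ℕ} (h : {x | v x ≠ x}.Finite) : (Inv v).Finite := by
  set N : ℕ := h.toFinset.sup id + 1 with hN
  have hfix : ∀ x, N ≤ x → v x = x := by
    intro x hx
    by_contra hne
    have hmem : x ∈ h.toFinset := by simpa using hne
    have := Finset.le_sup (f := id) hmem
    simp only [id] at this
    omega
  have hlt : ∀ x, x < N → v x < N := by
    intro x hx
    by_contra h'
    push_neg at h'
    have h2 : v (v x) = v x := hfix (v x) h'
    have h3 : v x = x := v.injective h2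
    omega
  apply Set.Finite.subset ((Set.finite_Iio N).prod (Set.finite_Iio N))
  rintro ⟨p, q⟩ hmem
  obtain ⟨h1, h2⟩ := mem_Inv.mp hmem
  simp only [Set.mem_prod, Set.mem_Iio]
  have hq : q < N := by
    by_contra hq
    push_neg at hq
    rw [hfix q hq] at h2
    rcases lt_or_ge p N with hp | hp
    · have := hlt p hp; omega
    · rw [hfix p hp] at h2; omega
  exact ⟨lt_trans h1 hq, hq⟩

lemma supp_mul_swap {v : Equiv.Perm ℕ} (a b : ℕ) (h : {x | v x ≠ x}.Finite) :
    {x | (v * Equiv.swap a b) x ≠ x}.Finite := by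
  apply (h.union ((Set.finite_singleton a).insert b)).subset
  intro x hx
  simp only [Set.mem_setOf_eq, Equiv.Perm.mul_apply] at hx
  by_cases hxa : x = a
  · right; simp [hxa]
  · by_cases hxb : x = b
    · right; simp [hxb]
    · left
      rw [Equiv.swap_apply_of_ne_of_ne hxa hxb] at hx
      exact hx

/-- Coordinate adjustment: move an endpoint `a`/`b` to the other endpoint, provided the
partner coordinate `o` lies outside the open interval `(a,b)`. -/
def fcoord (a b o x : ℕ) : ℕ :=
  if (x = a ∨ x = b) ∧ (o ≤ a ∨ b ≤ o) then (if x = a then b else a) else x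

/-- The pair map used to inject inversions of `v` into inversions of `v·(a,b)`. -/
def g (a b : ℕ) (p : ℕ × ℕ) : ℕ × ℕ := (fcoord a b p.2 p.1, fcoord a b p.1 p.2)

lemma fcoord_a_out {a b o : ℕ} (h : o ≤ a ∨ b ≤ o) : fcoord a b o a = b := by
  simp [fcoord, h]

lemma fcoord_b_out {a b o : ℕ} (hab : a < b) (h : o ≤ a ∨ b ≤ o) : fcoord a b o b = a := by
  have : b ≠ a := by omega
  simp [fcoord, h, this]

lemma fcoord_in {a b o x : ℕ} (h1 : a < o) (h2 : o < b) : fcoord a b o x = x := by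
  have : ¬ ((x = a ∨ x = b) ∧ (o ≤ a ∨ b ≤ o)) := by
    rintro ⟨-, h⟩; omega
  simp [fcoord, this]

lemma fcoord_ne {a b o x : ℕ} (h1 : x ≠ a) (h2 : x ≠ b) : fcoord a b o x = x := by
  simp [fcoord, h1, h2]

/-- Explicit computation of `g` on the seven relevant regions. -/
lemma g_eval_1 {a b p : ℕ} (hp : p < a) (hab : a < b) : g a b (p, a) = (p, b) := by
  simp only [g, fcoord_ne (by omega : p ≠ a) (by omega : p ≠ b),
    fcoord_a_out (Or.inl (le_of_lt hp))]

lemma g_eval_2 {a b p : ℕ} (hp : p < a) (hab : a < b) : g a b (p, b) = (p, a) := by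
  simp only [g, fcoord_ne (by omega : p ≠ a) (by omega : p ≠ b),
    fcoord_b_out hab (Or.inl (le_of_lt hp))]

lemma g_eval_3 {a b p : ℕ} (hp1 : a < p) (hp2 : p < b) : g a b (p, b) = (p, b) := by
  have hcond : ¬ ((b = a ∨ b = b) ∧ (p ≤ a ∨ b ≤ p)) := by rintro ⟨-, h⟩; omega
  have h2 : fcoord a b p b = b := if_neg hcond
  simp only [g, fcoord_ne (by omega : p ≠ a) (by omega : p ≠ b), h2]

lemma g_eval_4 {a b q : ℕ} (hq1 : a < q) (hq2 : q < b) : g a b (a, q) = (a, q) := by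
  simp only [g, fcoord_in hq1 hq2, fcoord_ne (by omega : q ≠ a) (by omega : q ≠ b)]

lemma g_eval_5 {a b q : ℕ} (hab : a < b) (hq : b < q) : g a b (a, q) = (b, q) := by
  simp only [g, fcoord_a_out (Or.inr (le_of_lt hq)),
    fcoord_ne (by omega : q ≠ a) (by omega : q ≠ b)]

lemma g_eval_6 {a b q : ℕ} (hab : a < b) (hq : b < q) : g a b (b, q) = (a, q) := by
  simp only [g, fcoord_b_out hab (Or.inr (le_of_lt hq)),
    fcoord_ne (by omega : q ≠ a) (by omega : q ≠ b)]

lemma g_eval_7 {a b p q : ℕ} (hpa : p ≠ a) (hpb : p ≠ b) (hqa : q ≠ a) (hqb : q ≠ b) :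
    g a b (p, q) = (p, q) := by
  simp only [g, fcoord_ne hpa hpb, fcoord_ne hqa hqb]

section Key

variable {v : Equiv.Perm ℕ} {a b : ℕ}

lemma sw_l (a b : ℕ) : Equiv.swap a b a = b := Equiv.swap_apply_left a b
lemma sw_r (a b : ℕ) : Equiv.swap a b b = a := Equiv.swap_apply_right a b

/-- `g a b` maps inversions of `v` to inversions of `v·(a,b)`. -/
lemma g_mem (hab : a < b) (hv : v a < v b) :
    ∀ p ∈ Inv v, g a b p ∈ Inv (v * Equiv.swap a b) := by
  rintro ⟨p, q⟩ hmem
  obtain ⟨h1, h2⟩ := mem_Inv.mp hmem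
  rcases eq_or_ne a q with hqa | hqa
  · -- q = a, p < a
    subst hqa
    rw [g_eval_1 h1 hab]
    exact mem_Inv_w (by omega)
      (by rw [sw_r, Equiv.swap_apply_of_ne_of_ne (by omega : p ≠ a) (by omega : p ≠ b)]
          exact h2)
  · rcases eq_or_ne b q with hqb | hqb
    · subst hqb
      rcases lt_trichotomy p a with hpa | hpa | hpa
      · rw [g_eval_2 hpa hab]
        exact mem_Inv_w hpa
          (by rw [sw_l, Equiv.swap_apply_of_ne_of_ne (by omega : p ≠ a) (by omega : p ≠ b)]
              exact h2)
      · rw [hpa] at h2; omega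
      · rw [g_eval_3 hpa h1]
        exact mem_Inv_w h1
          (by rw [sw_r, Equiv.swap_apply_of_ne_of_ne (by omega : p ≠ a) (by omega : p ≠ b)]
              exact lt_trans hv h2)
    · rcases eq_or_ne a p with hpa | hpa
      · subst hpa
        rcases lt_or_ge q b with hqlt | hqge
        · rw [g_eval_4 h1 hqlt]
          exact mem_Inv_w h1
            (by rw [sw_l, Equiv.swap_apply_of_ne_of_ne (Ne.symm hqa) (Ne.symm hqb)]
                exact lt_trans h2 hv)
        · have hq' : b < q := lt_of_le_of_ne hqge hqb
          rw [g_eval_5 hab hq']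
          exact mem_Inv_w hq'
            (by rw [sw_r, Equiv.swap_apply_of_ne_of_ne (Ne.symm hqa) (Ne.symm hqb)]
                exact h2)
      · rcases eq_or_ne b p with hpb | hpb
        · subst hpb
          rw [g_eval_6 hab h1]
          exact mem_Inv_w (by omega)
            (by rw [sw_l, Equiv.swap_apply_of_ne_of_ne (Ne.symm hqa) (Ne.symm hqb)]
                exact h2)
        · rw [g_eval_7 (Ne.symm hpa) (Ne.symm hpb) (Ne.symm hqa) (Ne.symm hqb)]
          exact mem_Inv_w h1
            (by rw [Equiv.swap_apply_of_ne_of_ne (Ne.symm hpa) (Ne.symm hpb),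
                  Equiv.swap_apply_of_ne_of_ne (Ne.symm hqa) (Ne.symm hqb)]
                exact h2)

/-- `g a b` is an involution on the inversion set of `v`. -/
lemma g_invol (hab : a < b) (hv : v a < v b) :
    ∀ p ∈ Inv v, g a b (g a b p) = p := by
  rintro ⟨p, q⟩ hmem
  obtain ⟨h1, h2⟩ := mem_Inv.mp hmem
  rcases eq_or_ne a q with hqa | hqa
  · subst hqa
    rw [g_eval_1 h1 hab, g_eval_2 h1 hab]
  · rcases eq_or_ne b q with hqb | hqb
    · subst hqb
      rcases lt_trichotomy p a with hpa | hpa | hpa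
      · rw [g_eval_2 hpa hab, g_eval_1 hpa hab]
      · rw [hpa] at h2; omega
      · rw [g_eval_3 hpa h1, g_eval_3 hpa h1]
    · rcases eq_or_ne a p with hpa | hpa
      · subst hpa
        rcases lt_or_ge q b with hqlt | hqge
        · rw [g_eval_4 h1 hqlt, g_eval_4 h1 hqlt]
        · have hq' : b < q := lt_of_le_of_ne hqge hqb
          rw [g_eval_5 hab hq', g_eval_6 hab hq']
      · rcases eq_or_ne b p with hpb | hpb
        · subst hpb
          rw [g_eval_6 hab h1, g_eval_5 hab h1]
        · rw [g_eval_7 (Ne.symm hpa) (Ne.symm hpb) (Ne.symm hqa) (Ne.symm hqb),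
            g_eval_7 (Ne.symm hpa) (Ne.symm hpb) (Ne.symm hqa) (Ne.symm hqb)]

lemma ab_notMem_image (hab : a < b) (hv : v a < v b) : (a, b) ∉ g a b '' Inv v := by
  rintro ⟨⟨p, q⟩, hp, heq⟩
  obtain ⟨h1, h2⟩ := mem_Inv.mp hp
  have heq' : fcoord a b q p = a ∧ fcoord a b p q = b := by
    have := heq
    simp only [g, Prod.mk.injEq] at this
    exact this
  obtain ⟨hfst, hsnd⟩ := heq'
  by_cases hcp : (p = a ∨ p = b) ∧ (q ≤ a ∨ b ≤ q)
  · rcases hcp.1 with hpa | hpb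
    · rw [hpa, fcoord_a_out hcp.2] at hfst; omega
    · have hbq : b < q := hpb ▸ h1
      rw [fcoord_ne (by omega : q ≠ a) (by omega : q ≠ b)] at hsnd
      omega
  · rw [show fcoord a b q p = p from if_neg hcp] at hfst
    have hq : a < q ∧ q < b := by
      by_contra hcon
      exact hcp ⟨Or.inl hfst, by omega⟩
    rw [fcoord_ne (by omega : q ≠ a) (by omega : q ≠ b)] at hsnd
    omega

lemma injOn_g (hab : a < b) (hv : v a < v b) : Set.InjOn (g a b) (Inv v) :=
  fun p hp q hq h => by rw [← g_invol hab hv p hp, h, g_invol hab hv q hq]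

lemma len_succ_le (hfin : {x | v x ≠ x}.Finite) (hab : a < b) (hv : v a < v b) :
    len v + 1 ≤ len (v * Equiv.swap a b) := by
  have hIv : (Inv v).Finite := inv_finite hfin
  have hIw : (Inv (v * Equiv.swap a b)).Finite := inv_finite (supp_mul_swap a b hfin)
  have hsub : insert (a, b) (g a b '' Inv v) ⊆ Inv (v * Equiv.swap a b) := by
    rintro x hx
    rcases hx with rfl | ⟨p, hp, rfl⟩
    · exact mem_Inv_w hab (by rw [sw_l, sw_r]; exact hv)
    · exact g_mem hab hv p hp
  calc len v + 1 = (insert (a, b) (g a b '' Inv v)).ncard := by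
        rw [Set.ncard_insert_of_notMem (ab_notMem_image hab hv) (hIv.image _),
          Set.ncard_image_of_injOn (injOn_g hab hv), len_eq]
    _ ≤ _ := Set.ncard_le_ncard hsub hIw

lemma len_add_two_le (hfin : {x | v x ≠ x}.Finite) (hab : a < b) (hv : v a < v b)
    {c : ℕ} (hc1 : a < c) (hc2 : c < b) (hvc1 : v a < v c) (hvc2 : v c < v b) :
    len v + 2 ≤ len (v * Equiv.swap a b) := by
  have hIv : (Inv v).Finite := inv_finite hfin
  have hIw : (Inv (v * Equiv.swap a b)).Finite := inv_finite (supp_mul_swap a b hfin)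
  have hac_notmem : (a, c) ∉ g a b '' Inv v := by
    rintro ⟨p, hp, heq⟩
    have : p = (a, c) := by rw [← g_invol hab hv p hp, heq, g_eval_4 hc1 hc2]
    subst this
    obtain ⟨-, h2⟩ := mem_Inv.mp hp
    omega
  have hcb_notmem : (c, b) ∉ g a b '' Inv v := by
    rintro ⟨p, hp, heq⟩
    have : p = (c, b) := by rw [← g_invol hab hv p hp, heq, g_eval_3 hc1 hc2]
    subst this
    obtain ⟨-, h2⟩ := mem_Inv.mp hp
    omega
  have hsub : insert (a, c) (insert (a, b) (g a b '' Inv v)) ⊆ Inv (v * Equiv.swap a b) := by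
    rintro x hx
    rcases hx with rfl | rfl | ⟨p, hp, rfl⟩
    · exact mem_Inv_w hc1
        (by rw [sw_l, Equiv.swap_apply_of_ne_of_ne (by omega : c ≠ a) (by omega : c ≠ b)]
            exact hvc2)
    · exact mem_Inv_w hab (by rw [sw_l, sw_r]; exact hv)
    · exact g_mem hab hv p hp
  calc len v + 2 = (insert (a, c) (insert (a, b) (g a b '' Inv v))).ncard := by
        rw [Set.ncard_insert_of_notMem
            (by simp only [Set.mem_insert_iff]
                push_neg
                exact ⟨by simp [Prod.ext_iff]; omega, hac_notmem⟩)
            (((hIv.image _)).insert _),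
          Set.ncard_insert_of_notMem (ab_notMem_image hab hv) (hIv.image _),
          Set.ncard_image_of_injOn (injOn_g hab hv), len_eq]
    _ ≤ _ := Set.ncard_le_ncard hsub hIw

lemma covTrans_lt (hfin : {x | v x ≠ x}.Finite) (h : covTrans v a b) : v a < v b := by
  obtain ⟨-, hab, hlen⟩ := h
  by_contra h'
  push_neg at h'
  have hne : v b ≠ v a := fun he => by have := v.injective he; omega
  have hba : v b < v a := lt_of_le_of_ne h' hne
  set w := v * Equiv.swap a b with hw
  have hwfin : {x | w x ≠ x}.Finite := supp_mul_swap a b hfin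
  have hwv : w a < w b := by
    show v (Equiv.swap a b a) < v (Equiv.swap a b b)
    rw [sw_l, sw_r]; exact hba
  have hle := len_succ_le hwfin hab hwv
  have hwsw : w * Equiv.swap a b = v := by
    rw [hw, mul_assoc, Equiv.swap_mul_self, mul_one]
  rw [hwsw, hlen] at hle
  omega

lemma covTrans_cond (hfin : {x | v x ≠ x}.Finite) (h : covTrans v a b) :
    ∀ c, a < c → c < b → v c < v a ∨ v b < v c := by
  intro c hc1 hc2
  by_contra hcon
  push_neg at hcon
  obtain ⟨hca, hcb⟩ := hcon
  have hv : v a < v b := covTrans_lt hfin h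
  have h1 : v a < v c :=
    lt_of_le_of_ne hca (fun he => by have := v.injective he; omega)
  have h2 : v c < v b :=
    lt_of_le_of_ne hcb (fun he => by have := v.injective he; omega)
  obtain ⟨-, hab, hlen⟩ := h
  have := len_add_two_le hfin hab hv hc1 hc2 h1 h2
  omega

end Key

end ForbiddenAux

open ForbiddenAux in
/-- There is no permutation `v` in `S_∞` and positions `i < j ≤ k < l < m` such that
`v ⋖ v(j,m)`, `v(j,m) ⋖ v(j,m)(i,m)`, and `v(j,m)(i,m) ⋖ v(j,m)(i,m)(i,l)` are all
covering relations in the Bruhat order; i.e. a saturated chain with transposition labels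
`(j,m),(i,m),(i,l)` with `i < j ≤ k < l < m` is forbidden. -/
theorem forbidden_chain :
    ¬ ∃ (v : Equiv.Perm ℕ) (i j k l m : ℕ),
        {x | v x ≠ x}.Finite ∧ 0 < i ∧ i < j ∧ j ≤ k ∧ k < l ∧ l < m ∧
        covTrans v j m ∧
        covTrans (v * Equiv.swap j m) i m ∧
        covTrans (v * Equiv.swap j m * Equiv.swap i m) i l := by
  rintro ⟨v, i, j, k, l, m, hfin, hi, hij, hjk, hkl, hlm, h1, h2, h3⟩
  have hjm : j < m := by omega
  have hil : i < l := by omega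
  have him : i < m := by omega
  set u := v * Equiv.swap j m with hu
  set w := u * Equiv.swap i m with hw
  have hfinu : {x | u x ≠ x}.Finite := supp_mul_swap j m hfin
  have hfinw : {x | w x ≠ x}.Finite := supp_mul_swap i m hfinu
  -- evaluate u
  have hui : u i = v i := by
    show v (Equiv.swap j m i) = v i
    rw [Equiv.swap_apply_of_ne_of_ne (by omega : i ≠ j) (by omega : i ≠ m)]
  have huj : u j = v m := by show v (Equiv.swap j m j) = v m; rw [sw_l]
  have hum : u m = v j := by show v (Equiv.swap j m m) = v j; rw [sw_r]
  have hul : u l = v l := by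
    show v (Equiv.swap j m l) = v l
    rw [Equiv.swap_apply_of_ne_of_ne (by omega : l ≠ j) (by omega : l ≠ m)]
  -- evaluate w
  have hwi : w i = v j := by
    show u (Equiv.swap i m i) = v j
    rw [sw_l]; exact hum
  have hwj : w j = v m := by
    show u (Equiv.swap i m j) = v m
    rw [Equiv.swap_apply_of_ne_of_ne (by omega : j ≠ i) (by omega : j ≠ m)]; exact huj
  have hwl : w l = v l := by
    show u (Equiv.swap i m l) = v l
    rw [Equiv.swap_apply_of_ne_of_ne (by omega : l ≠ i) (by omega : l ≠ m)]; exact hul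
  -- consequences of the covers
  have f1 : v j < v m := covTrans_lt hfin h1
  have f1l : v l < v j ∨ v m < v l := covTrans_cond hfin h1 l (by omega) hlm
  have f3 : w i < w l := covTrans_lt hfinw h3
  have f3' : v j < v l := by rwa [hwi, hwl] at f3
  have f3j : w j < w i ∨ w l < w j := covTrans_cond hfinw h3 j hij (by omega)
  rw [hwi, hwj, hwl] at f3j
  omega

end
end

section
/- Let v, w be permutations in S_∞ and k ≥ 1. There is at most one saturated chain γ: v = v_0 ⋖ v_1 ⋖ ... ⋖ v_q = w in the k-Bruhat order, with cover labels (a_1,b_1), ..., (a_q,b_q) (so v_i = v_{i-1}·(a_i,b_i) with a_i ≤ k < b_i), satisfying both: (P1) b_1 ≥ b_2 ≥ ... ≥ b_q, and (P0) for each i with 2 ≤ i ≤ q−1, if a_j = a_i for some j < i, then either b_{i+1} < b_i, or b_{i+1} = b_i and a_i < a_{i+1}. -/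
noncomputable section

/-- `IsKChain k v L` : the list of transposition labels `L = [(a_1,b_1),...,(a_q,b_q)]`
describes a saturated chain in the `k`-Bruhat order starting at `v`: each step is a Bruhat
cover `u ⋖ u·(a_i,b_i)` with `a_i ≤ k < b_i` (positions being positive integers). -/
def IsKChain (k : ℕ) : Equiv.Perm ℕ → List (ℕ × ℕ) → Prop
  | _, [] => True
  | v, p :: t => 0 < p.1 ∧ p.1 ≤ k ∧ k < p.2 ∧
      len (v * Equiv.swap p.1 p.2) = len v + 1 ∧ IsKChain k (v * Equiv.swap p.1 p.2) t

/-- The endpoint of the chain starting at `v` with transposition labels `L`. -/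
def chainEnd : Equiv.Perm ℕ → List (ℕ × ℕ) → Equiv.Perm ℕ
  | v, [] => v
  | v, p :: t => chainEnd (v * Equiv.swap p.1 p.2) t

/-- The order `≺` on labels of covers: `(a,b) ≺ (c,d)` iff `b > d`, or `b = d` and `a < c`. -/
def prec (p q : ℕ × ℕ) : Prop := q.2 < p.2 ∨ (q.2 = p.2 ∧ p.1 < q.1)

/-- Condition (P1): `b_1 ≥ b_2 ≥ ... ≥ b_q` (0-indexed list access). -/
def CondP1 (L : List (ℕ × ℕ)) : Prop :=
  ∀ t, t + 1 < L.length → (L.getD (t+1) (0,0)).2 ≤ (L.getD t (0,0)).2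

/-- Condition (P0): for `2 ≤ i ≤ q-1` (1-indexed; here `t = i-1` is the 0-indexed
position, so `1 ≤ t` and `t + 2 ≤ q`), if `a_j = a_i` for some `j < i`, then
`(a_i,b_i) ≺ (a_{i+1},b_{i+1})`. -/
def CondP0 (L : List (ℕ × ℕ)) : Prop :=
  ∀ t, 1 ≤ t → t + 2 ≤ L.length →
    (∃ s, s < t ∧ (L.getD s (0,0)).1 = (L.getD t (0,0)).1) →
    prec (L.getD t (0,0)) (L.getD (t+1) (0,0))

namespace P0P1

open Finset



/-- pairs i<j with both < N -/
def PN (N : ℕ) : Finset (ℕ × ℕ) :=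
  (Finset.range N ×ˢ Finset.range N).filter fun p => p.1 < p.2

def invF (u : Equiv.Perm ℕ) (N : ℕ) : Finset (ℕ × ℕ) :=
  (PN N).filter fun p => u p.2 < u p.1

lemma apply_lt_of_lt (u : Equiv.Perm ℕ) {N i : ℕ} (hN : ∀ j, N ≤ j → u j = j)
    (hi : i < N) : u i < N := by
  by_contra h
  push_neg at h
  have h2 : u i = i := u.injective (hN _ h)
  omega

lemma len_eq_card {u : Equiv.Perm ℕ} {N : ℕ} (hN : ∀ j, N ≤ j → u j = j) :
    len u = (invF u N).card := by
  have hset : {p : ℕ × ℕ | p.1 < p.2 ∧ u p.2 < u p.1} = ↑(invF u N) := by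
    ext ⟨i, j⟩
    simp only [Set.mem_setOf_eq, invF, PN, Finset.coe_filter, Finset.mem_filter,
      Finset.mem_product, Finset.mem_range, Set.mem_setOf_eq]
    constructor
    · rintro ⟨hij, hji⟩
      have hjN : j < N := by
        by_contra h
        push_neg at h
        have huj : u j = j := hN j h
        rcases lt_or_ge i N with hi | hi
        · have := apply_lt_of_lt u hN hi; omega
        · have := hN i hi; omega
      exact ⟨⟨⟨by omega, hjN⟩, hij⟩, hji⟩
    · tauto
  rw [len, hset, Set.ncard_coe_finset]

/-- the sorting swap map on pairs -/
def Ff (a b : ℕ) (p : ℕ × ℕ) : ℕ × ℕ :=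
  if Equiv.swap a b p.1 < Equiv.swap a b p.2 then (Equiv.swap a b p.1, Equiv.swap a b p.2)
  else (Equiv.swap a b p.2, Equiv.swap a b p.1)

lemma swap_lt {a b N x : ℕ} (ha : a < N) (hb : b < N) (hx : x < N) :
    Equiv.swap a b x < N := by
  rcases eq_or_ne x a with rfl | hxa
  · rw [Equiv.swap_apply_left]; exact hb
  rcases eq_or_ne x b with rfl | hxb
  · rw [Equiv.swap_apply_right]; exact ha
  · rw [Equiv.swap_apply_of_ne_of_ne hxa hxb]; exact hx

lemma Ff_mem {a b N : ℕ} (ha : a < N) (hb : b < N) {p : ℕ × ℕ} (hp : p ∈ PN N) :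
    Ff a b p ∈ PN N := by
  simp only [PN, Finset.mem_filter, Finset.mem_product, Finset.mem_range] at hp ⊢
  obtain ⟨⟨h1, h2⟩, h3⟩ := hp
  have hne : Equiv.swap a b p.1 ≠ Equiv.swap a b p.2 :=
    fun h => (by omega : p.1 ≠ p.2) ((Equiv.swap a b).injective h)
  unfold Ff
  split_ifs with h
  · exact ⟨⟨swap_lt ha hb h1, swap_lt ha hb h2⟩, h⟩
  · exact ⟨⟨swap_lt ha hb h2, swap_lt ha hb h1⟩, by omega⟩

lemma Ff_invol {a b : ℕ} {p : ℕ × ℕ} (hp : p.1 < p.2) : Ff a b (Ff a b p) = p := by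
  have hne : Equiv.swap a b p.1 ≠ Equiv.swap a b p.2 :=
    fun h => (by omega : p.1 ≠ p.2) ((Equiv.swap a b).injective h)
  unfold Ff
  split_ifs with h1 h2 h2 <;>
    simp only [Equiv.swap_apply_self] at * <;>
    first
      | (exact Prod.ext rfl rfl)
      | omega


lemma key (u : Equiv.Perm ℕ) (a b N : ℕ) (hab : a < b) (hbN : b < N) :
    (invF (u * Equiv.swap a b) N).card
      + 2 * ((PN N).filter
          (fun p => Equiv.swap a b p.2 < Equiv.swap a b p.1 ∧ u p.2 < u p.1)).card
    = (invF u N).card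
      + ((PN N).filter (fun p => Equiv.swap a b p.2 < Equiv.swap a b p.1)).card := by
  have haN : a < N := lt_trans hab hbN
  have hmem : ∀ p ∈ PN N, p.1 < p.2 := by
    intro p hp
    simp only [PN, Finset.mem_filter] at hp
    exact hp.2
  -- convert cards to sums over PN N
  simp only [invF, Finset.card_filter]
  -- reindex the first sum by Ff
  have hreidx :
      (∑ p ∈ PN N, if (u * Equiv.swap a b) p.2 < (u * Equiv.swap a b) p.1 then 1 else 0)
      = ∑ p ∈ PN N,
          if (u * Equiv.swap a b) (Ff a b p).2 < (u * Equiv.swap a b) (Ff a b p).1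
          then 1 else 0 := by
    apply Finset.sum_nbij' (i := Ff a b) (j := Ff a b)
    · intro p hp; exact Ff_mem haN hbN hp
    · intro p hp; exact Ff_mem haN hbN hp
    · intro p hp; exact Ff_invol (hmem p hp)
    · intro p hp; exact Ff_invol (hmem p hp)
    · intro p hp; rw [Ff_invol (hmem p hp)]
  rw [hreidx, Finset.mul_sum, ← Finset.sum_add_distrib, ← Finset.sum_add_distrib]
  apply Finset.sum_congr rfl
  intro p hp
  have hp12 := hmem p hp
  have hne : Equiv.swap a b p.1 ≠ Equiv.swap a b p.2 :=
    fun h => (by omega : p.1 ≠ p.2) ((Equiv.swap a b).injective h)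
  have hune : u p.1 ≠ u p.2 := fun h => (by omega : p.1 ≠ p.2) (u.injective h)
  rcases lt_or_gt_of_ne hne with h | h
  · have hF : Ff a b p = (Equiv.swap a b p.1, Equiv.swap a b p.2) := by
      unfold Ff; rw [if_pos h]
    rw [hF]
    simp only [Equiv.Perm.mul_apply, Equiv.swap_apply_self]
    split_ifs <;> omega
  · have hF : Ff a b p = (Equiv.swap a b p.2, Equiv.swap a b p.1) := by
      unfold Ff; rw [if_neg (by omega)]
    rw [hF]
    simp only [Equiv.Perm.mul_apply, Equiv.swap_apply_self]
    rcases lt_or_gt_of_ne hune with h2 | h2 <;> split_ifs <;> omega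


def Dset (a b : ℕ) : Finset (ℕ × ℕ) :=
  ({(a, b)} ∪ (Finset.Ioo a b).image fun j => (a, j))
    ∪ (Finset.Ioo a b).image fun j => (j, b)

lemma D_decomp {a b N : ℕ} (hab : a < b) (hbN : b < N) (g : ℕ × ℕ → Prop)
    [DecidablePred g] :
    ((PN N).filter (fun p => Equiv.swap a b p.2 < Equiv.swap a b p.1 ∧ g p)).card
    = (if g (a, b) then 1 else 0)
      + (∑ j ∈ Finset.Ioo a b, if g (a, j) then 1 else 0)
      + (∑ j ∈ Finset.Ioo a b, if g (j, b) then 1 else 0) := by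
  have hset : (PN N).filter (fun p => Equiv.swap a b p.2 < Equiv.swap a b p.1 ∧ g p)
      = (Dset a b).filter g := by
    ext ⟨i, j⟩
    constructor
    · intro h
      obtain ⟨hPN, hflip, hg⟩ := Finset.mem_filter.mp h
      obtain ⟨hrange, hij⟩ := Finset.mem_filter.mp hPN
      refine Finset.mem_filter.mpr ⟨?_, hg⟩
      simp only [Dset, Finset.mem_union, Finset.mem_singleton, Finset.mem_image,
        Finset.mem_Ioo]
      simp only at hflip hij
      by_cases hia : i = a
      · subst hia
        by_cases hjb : j = b
        · subst hjb; exact Or.inl (Or.inl rfl)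
        · have hja : j ≠ i := by omega
          rw [Equiv.swap_apply_left, Equiv.swap_apply_of_ne_of_ne hja hjb] at hflip
          exact Or.inl (Or.inr ⟨j, ⟨by omega, by omega⟩, rfl⟩)
      · by_cases hjb : j = b
        · subst hjb
          by_cases hib : i = j
          · omega
          · rw [Equiv.swap_apply_right, Equiv.swap_apply_of_ne_of_ne hia hib] at hflip
            exact Or.inr ⟨i, ⟨by omega, by omega⟩, rfl⟩
        · exfalso
          by_cases hja : j = a
          · subst hja
            by_cases hib : i = b
            · omega
            · rw [Equiv.swap_apply_left, Equiv.swap_apply_of_ne_of_ne hia hib] at hflip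
              omega
          · by_cases hib : i = b
            · subst hib
              rw [Equiv.swap_apply_right,
                Equiv.swap_apply_of_ne_of_ne hja hjb] at hflip
              omega
            · rw [Equiv.swap_apply_of_ne_of_ne hja hjb,
                Equiv.swap_apply_of_ne_of_ne hia hib] at hflip
              omega
    · intro h
      obtain ⟨hD, hg⟩ := Finset.mem_filter.mp h
      simp only [Dset, Finset.mem_union, Finset.mem_singleton, Finset.mem_image,
        Finset.mem_Ioo] at hD
      have key : i < j ∧ j < N ∧ Equiv.swap a b j < Equiv.swap a b i := by
        rcases hD with (heq | ⟨c, hc, heq⟩) | ⟨c, hc, heq⟩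
        · injection heq with h1 h2; subst h1; subst h2
          rw [Equiv.swap_apply_left, Equiv.swap_apply_right]
          exact ⟨hab, hbN, hab⟩
        · injection heq with h1 h2; subst h1; subst h2
          rw [Equiv.swap_apply_left,
            Equiv.swap_apply_of_ne_of_ne (by omega) (by omega)]
          exact ⟨by omega, by omega, by omega⟩
        · injection heq with h1 h2; subst h1; subst h2
          rw [Equiv.swap_apply_right,
            Equiv.swap_apply_of_ne_of_ne (by omega) (by omega)]
          exact ⟨by omega, by omega, by omega⟩
      refine Finset.mem_filter.mpr ⟨Finset.mem_filter.mpr ⟨?_, key.1⟩, key.2.2, hg⟩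
      simp only [Finset.mem_product, Finset.mem_range]
      exact ⟨by omega, key.2.1⟩
  rw [hset]
  unfold Dset
  rw [Finset.filter_union, Finset.filter_union]
  have hinj1 : Function.Injective (fun j : ℕ => (a, j)) := by
    intro x y hxy; injection hxy
  have hinj2 : Function.Injective (fun j : ℕ => (j, b)) := by
    intro x y hxy; injection hxy
  have hd1 : Disjoint (({(a, b)} : Finset (ℕ × ℕ)).filter g)
      (((Finset.Ioo a b).image fun j => (a, j)).filter g) := by
    rw [Finset.disjoint_left]
    intro p hp1 hp2
    obtain ⟨hp1, -⟩ := Finset.mem_filter.mp hp1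
    obtain ⟨hp2, -⟩ := Finset.mem_filter.mp hp2
    rw [Finset.mem_singleton] at hp1
    obtain ⟨c, hc, heq⟩ := Finset.mem_image.mp hp2
    rw [Finset.mem_Ioo] at hc
    subst hp1
    injection heq with h1 h2
    omega
  have hd2 : Disjoint (({(a, b)} : Finset (ℕ × ℕ)).filter g ∪
        (((Finset.Ioo a b).image fun j => (a, j)).filter g))
      (((Finset.Ioo a b).image fun j => (j, b)).filter g) := by
    rw [Finset.disjoint_left]
    intro p hp1 hp2
    obtain ⟨hp2, -⟩ := Finset.mem_filter.mp hp2
    obtain ⟨c, hc, heq⟩ := Finset.mem_image.mp hp2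
    rw [Finset.mem_Ioo] at hc
    subst heq
    rcases Finset.mem_union.mp hp1 with h1 | h1
    · obtain ⟨h1, -⟩ := Finset.mem_filter.mp h1
      rw [Finset.mem_singleton] at h1
      injection h1 with e1 e2; omega
    · obtain ⟨h1, -⟩ := Finset.mem_filter.mp h1
      obtain ⟨d, hd, heq2⟩ := Finset.mem_image.mp h1
      injection heq2 with e1 e2; omega
  rw [Finset.card_union_of_disjoint hd2, Finset.card_union_of_disjoint hd1]
  congr 1
  · congr 1
    · rw [Finset.filter_singleton]
      split_ifs <;> simp
    · rw [Finset.filter_image,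
        Finset.card_image_of_injective _ hinj1, Finset.card_filter]
  · rw [Finset.filter_image,
      Finset.card_image_of_injective _ hinj2, Finset.card_filter]


lemma exists_bound {u : Equiv.Perm ℕ} (h : {i | u i ≠ i}.Finite) :
    ∃ N, ∀ j, N ≤ j → u j = j := by
  obtain ⟨N, hN⟩ := h.bddAbove
  refine ⟨N + 1, fun j hj => ?_⟩
  by_contra hne
  have := hN (Set.mem_setOf_eq ▸ hne : j ∈ {i | u i ≠ i})
  omega

lemma cover_extract {u : Equiv.Perm ℕ} {a b : ℕ} (hab : a < b)
    (hfin : {i | u i ≠ i}.Finite)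
    (hlen : len (u * Equiv.swap a b) = len u + 1) :
    u a < u b ∧ ∀ c, a < c → c < b → ¬(u a < u c ∧ u c < u b) := by
  obtain ⟨N0, hN0⟩ := exists_bound hfin
  set N := max N0 (b + 1) with hNdef
  have hbN : b < N := by
    have := le_max_right N0 (b + 1); omega
  have hN : ∀ j, N ≤ j → u j = j := fun j hj =>
    hN0 j (le_trans (le_max_left _ _) hj)
  have hsN : ∀ j, N ≤ j → (u * Equiv.swap a b) j = j := by
    intro j hj
    have hja : j ≠ a := by omega
    have hjb : j ≠ b := by omega
    rw [Equiv.Perm.mul_apply, Equiv.swap_apply_of_ne_of_ne hja hjb, hN j hj]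
  rw [len_eq_card hsN, len_eq_card hN] at hlen
  have hkey := key u a b N hab hbN
  have hD1 := D_decomp hab hbN (N := N) (g := fun _ => True)
  have hD2 := D_decomp hab hbN (N := N) (g := fun p => u p.2 < u p.1)
  simp only [if_true, and_true] at hD1
  dsimp only at hD2
  have hE1 : (∑ _j ∈ Finset.Ioo a b, (1 : ℕ)) = (Finset.Ioo a b).card := by
    simp
  rw [hE1] at hD1
  have hune : ∀ j, j ∈ Finset.Ioo a b → u j ≠ u a ∧ u j ≠ u b := by
    intro j hj
    rw [Finset.mem_Ioo] at hj
    exact ⟨fun h => (by omega : j ≠ a) (u.injective h),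
      fun h => (by omega : j ≠ b) (u.injective h)⟩
  have huab : u a ≠ u b := fun h => (by omega : a ≠ b) (u.injective h)
  by_cases hu : u a < u b
  · refine ⟨hu, ?_⟩
    have hptw : ∀ j ∈ Finset.Ioo a b,
        ((if u j < u a then 1 else 0) + (if u b < u j then 1 else 0))
          + (if u a < u j ∧ u j < u b then 1 else 0) = 1 := by
      intro j hj
      obtain ⟨h1, h2⟩ := hune j hj
      split_ifs <;> omega
    have hsum :
        ((∑ j ∈ Finset.Ioo a b, if u j < u a then 1 else 0)
          + (∑ j ∈ Finset.Ioo a b, if u b < u j then 1 else 0))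
          + (∑ j ∈ Finset.Ioo a b, if u a < u j ∧ u j < u b then 1 else 0)
        = (Finset.Ioo a b).card := by
      rw [← Finset.sum_add_distrib, ← Finset.sum_add_distrib]
      rw [Finset.sum_congr rfl hptw]
      simp
    have hab0 : (if u b < u a then 1 else 0) = 0 := by
      rw [if_neg]; omega
    rw [hab0] at hD2
    have hBzero : (∑ j ∈ Finset.Ioo a b, if u a < u j ∧ u j < u b then 1 else 0) = 0 := by
      omega
    intro c hac hcb hbad
    have hc : c ∈ Finset.Ioo a b := Finset.mem_Ioo.mpr ⟨hac, hcb⟩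
    have := (Finset.sum_eq_zero_iff.mp hBzero) c hc
    rw [if_pos hbad] at this
    omega
  · exfalso
    have hu' : u b < u a := by omega
    have hptw : ∀ j ∈ Finset.Ioo a b,
        1 ≤ (if u j < u a then 1 else 0) + (if u b < u j then 1 else 0) := by
      intro j hj
      obtain ⟨h1, h2⟩ := hune j hj
      split_ifs <;> omega
    have hge : (Finset.Ioo a b).card ≤
        (∑ j ∈ Finset.Ioo a b, if u j < u a then 1 else 0)
          + (∑ j ∈ Finset.Ioo a b, if u b < u j then 1 else 0) := by
      rw [← Finset.sum_add_distrib]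
      calc (Finset.Ioo a b).card = ∑ _j ∈ Finset.Ioo a b, 1 := by simp
        _ ≤ _ := Finset.sum_le_sum hptw
    have hab1 : (if u b < u a then 1 else 0) = 1 := if_pos hu'
    rw [hab1] at hD2
    omega



lemma supp_mul_swap (u : Equiv.Perm ℕ) (a b : ℕ) :
    {i | (u * Equiv.swap a b) i ≠ i} ⊆ {i | u i ≠ i} ∪ {a, b} := by
  intro x hx
  by_contra hmem
  simp only [Set.mem_union, Set.mem_setOf_eq, Set.mem_insert_iff,
    Set.mem_singleton_iff, not_or] at hmem
  obtain ⟨h1, h2, h3⟩ := hmem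
  apply hx
  rw [Equiv.Perm.mul_apply, Equiv.swap_apply_of_ne_of_ne h2 h3]
  simpa using h1

structure KC (k : ℕ) where
  q : ℕ
  A : ℕ → ℕ
  B : ℕ → ℕ
  V : ℕ → Equiv.Perm ℕ
  hAk : ∀ t, t < q → A t ≤ k
  hBk : ∀ t, t < q → k < B t
  hV : ∀ t, t < q → V (t + 1) = V t * Equiv.swap (A t) (B t)
  hL : ∀ t, t < q → len (V (t + 1)) = len (V t) + 1
  hF : {i | V 0 i ≠ i}.Finite
  hP1 : ∀ t, t + 1 < q → B (t + 1) ≤ B t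
  hP0 : ∀ t, 1 ≤ t → t + 2 ≤ q → (∃ s, s < t ∧ A s = A t) →
        (B (t + 1) < B t ∨ (B (t + 1) = B t ∧ A t < A (t + 1)))

namespace KC

variable {k : ℕ} (c : KC k)

lemma suppFin : ∀ t, t ≤ c.q → {i | c.V t i ≠ i}.Finite := by
  intro t
  induction t with
  | zero => intro _; exact c.hF
  | succ t ih =>
    intro ht
    have h1 : t < c.q := by omega
    rw [c.hV t h1]
    exact Set.Finite.subset ((ih (by omega)).union ((Set.finite_singleton _).insert _))
      (supp_mul_swap _ _ _)

lemma hAB (t : ℕ) (ht : t < c.q) : c.A t < c.B t :=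
  lt_of_le_of_lt (c.hAk t ht) (c.hBk t ht)

lemma cover (t : ℕ) (ht : t < c.q) :
    c.V t (c.A t) < c.V t (c.B t) ∧
      ∀ x, c.A t < x → x < c.B t → ¬(c.V t (c.A t) < c.V t x ∧ c.V t x < c.V t (c.B t)) := by
  have := c.hL t ht
  rw [c.hV t ht] at this
  exact cover_extract (c.hAB t ht) (c.suppFin t (by omega)) this

lemma applyA (t : ℕ) (ht : t < c.q) : c.V (t + 1) (c.A t) = c.V t (c.B t) := by
  rw [c.hV t ht, Equiv.Perm.mul_apply, Equiv.swap_apply_left]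

lemma applyB (t : ℕ) (ht : t < c.q) : c.V (t + 1) (c.B t) = c.V t (c.A t) := by
  rw [c.hV t ht, Equiv.Perm.mul_apply, Equiv.swap_apply_right]

lemma applyO (t : ℕ) (ht : t < c.q) {x : ℕ} (hx1 : x ≠ c.A t) (hx2 : x ≠ c.B t) :
    c.V (t + 1) x = c.V t x := by
  rw [c.hV t ht, Equiv.Perm.mul_apply, Equiv.swap_apply_of_ne_of_ne hx1 hx2]

lemma untouched_le {p : ℕ} (hp : p ≤ k) {s t : ℕ} (hst : s ≤ t) (ht : t ≤ c.q)
    (h : ∀ r, s ≤ r → r < t → c.A r ≠ p) : c.V t p = c.V s p := by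
  induction t with
  | zero => have h0 : s = 0 := by omega
            rw [h0]
  | succ t ih =>
    rcases Nat.eq_or_lt_of_le hst with heq | hlt
    · rw [heq]
    · have h1 : t < c.q := by omega
      have h2 : p ≠ c.B t := by have := c.hBk t h1; omega
      rw [c.applyO t h1 (fun he => h t (by omega) (by omega) he.symm) h2]
      exact ih (by omega) (by omega) (fun r hr1 hr2 => h r hr1 (by omega))

lemma untouched_gt {p : ℕ} (hp : k < p) {s t : ℕ} (hst : s ≤ t) (ht : t ≤ c.q)
    (h : ∀ r, s ≤ r → r < t → c.B r ≠ p) : c.V t p = c.V s p := by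
  induction t with
  | zero => have h0 : s = 0 := by omega
            rw [h0]
  | succ t ih =>
    rcases Nat.eq_or_lt_of_le hst with heq | hlt
    · rw [heq]
    · have h1 : t < c.q := by omega
      have h2 : p ≠ c.A t := by have := c.hAk t h1; omega
      rw [c.applyO t h1 h2 (fun he => h t (by omega) (by omega) he.symm)]
      exact ih (by omega) (by omega) (fun r hr1 hr2 => h r hr1 (by omega))

lemma mono_le {p : ℕ} (hp : p ≤ k) {s t : ℕ} (hst : s ≤ t) (ht : t ≤ c.q) :
    c.V s p ≤ c.V t p := by
  induction t with
  | zero => have h0 : s = 0 := by omega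
            rw [h0]
  | succ t ih =>
    rcases Nat.eq_or_lt_of_le hst with heq | hlt
    · rw [heq]
    · have h1 : t < c.q := by omega
      have h2 : p ≠ c.B t := by have := c.hBk t h1; omega
      have step : c.V t p ≤ c.V (t + 1) p := by
        by_cases hA : p = c.A t
        · subst hA
          rw [c.applyA t h1]
          exact le_of_lt (c.cover t h1).1
        · rw [c.applyO t h1 hA h2]
      exact le_trans (ih (by omega) (by omega)) step

lemma anti_gt {p : ℕ} (hp : k < p) {s t : ℕ} (hst : s ≤ t) (ht : t ≤ c.q) :
    c.V t p ≤ c.V s p := by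
  induction t with
  | zero =>
    have : s = 0 := by omega
    rw [this]
  | succ t ih =>
    rcases Nat.eq_or_lt_of_le hst with heq | hlt
    · rw [heq]
    · have h1 : t < c.q := by omega
      have h2 : p ≠ c.A t := by have := c.hAk t h1; omega
      have step : c.V (t + 1) p ≤ c.V t p := by
        by_cases hB : p = c.B t
        · subst hB
          rw [c.applyB t h1]
          exact le_of_lt (c.cover t h1).1
        · rw [c.applyO t h1 h2 hB]
      exact le_trans step (ih (by omega) (by omega))

lemma Bmono {s t : ℕ} (hst : s ≤ t) (ht : t < c.q) : c.B t ≤ c.B s := by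
  induction t with
  | zero =>
    have : s = 0 := by omega
    rw [this]
  | succ t ih =>
    rcases Nat.eq_or_lt_of_le hst with heq | hlt
    · rw [heq]
    · exact le_trans (c.hP1 t ht) (ih (by omega) (by omega))

lemma alphaHist : ∀ s, s ≤ c.q →
    c.V s (c.A 0) = c.V 0 (c.A 0) ∨
      ∃ t, t < s ∧ c.A t = c.A 0 ∧ c.V s (c.A 0) = c.V (t + 1) (c.A 0) := by
  intro s
  induction s with
  | zero => intro _; exact Or.inl rfl
  | succ s ih =>
    intro hs
    have h1 : s < c.q := by omega
    by_cases hA : c.A s = c.A 0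
    · exact Or.inr ⟨s, by omega, hA, by rw [← hA]⟩
    · have h2 : c.A 0 ≠ c.B s := by
        have := c.hBk s h1; have := c.hAk 0 (by omega); omega
      have heq : c.V (s + 1) (c.A 0) = c.V s (c.A 0) :=
        c.applyO s h1 (fun h => hA h.symm) h2
      rcases ih (by omega) with h | ⟨t, h3, h4, h5⟩
      · exact Or.inl (heq.trans h)
      · exact Or.inr ⟨t, by omega, h4, heq.trans h5⟩

lemma alphaGe (hq : 1 ≤ c.q) {t : ℕ} (h1 : 1 ≤ t) (h2 : t ≤ c.q) :
    c.V 0 (c.B 0) ≤ c.V t (c.A 0) := by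
  have := c.applyA 0 (by omega)
  calc c.V 0 (c.B 0) = c.V 1 (c.A 0) := this.symm
    _ ≤ c.V t (c.A 0) := c.mono_le (c.hAk 0 (by omega)) h1 h2

lemma endB_lt (hq : 1 ≤ c.q) : c.V c.q (c.B 0) < c.V 0 (c.B 0) := by
  calc c.V c.q (c.B 0) ≤ c.V 1 (c.B 0) := c.anti_gt (c.hBk 0 (by omega)) hq le_rfl
    _ = c.V 0 (c.A 0) := c.applyB 0 (by omega)
    _ < c.V 0 (c.B 0) := (c.cover 0 (by omega)).1

lemma endBig {j : ℕ} (hjk : k < j) (hjB : c.B 0 < j) : c.V c.q j = c.V 0 j := by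
  apply c.untouched_gt hjk (Nat.zero_le _) le_rfl
  intro r _ hr
  have := c.Bmono (Nat.zero_le r) hr
  omega

end KC

namespace KC

variable {k : ℕ} (c : KC k)

open Classical in
lemma claimG_final (m R : ℕ) (him : m + 1 < c.q)
    (hαR : c.A 0 < R)
    (hRy : ∀ t, t ≤ m → c.V t R = c.V (m + 1) (c.B (m + 1)))
    (hRB : ∀ s, s ≤ m → R < c.B s)
    (hc₁y : c.V 0 (c.A 0) < c.V (m + 1) (c.B (m + 1)))
    (hyY : c.V (m + 1) (c.B (m + 1)) < c.V (m + 1) (c.A 0)) : False := by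
  have hP : ∃ t, t < m + 1 ∧ c.A t = c.A 0 ∧
      c.V (m + 1) (c.B (m + 1)) < c.V (t + 1) (c.A 0) := by
    rcases c.alphaHist (m + 1) (by omega) with h | ⟨t, h1, h2, h3⟩
    · exfalso; rw [h] at hyY; omega
    · exact ⟨t, h1, h2, by rw [← h3]; exact hyY⟩
  set s := Nat.find hP with hsdef
  obtain ⟨hs1, hs2, hs3⟩ := Nat.find_spec hP
  have hsmin : ∀ t, t < s →
      ¬(t < m + 1 ∧ c.A t = c.A 0 ∧
        c.V (m + 1) (c.B (m + 1)) < c.V (t + 1) (c.A 0)) :=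
    fun t ht => Nat.find_min hP ht
  have hsq : s < c.q := by omega
  have hVsR : c.V s R = c.V (m + 1) (c.B (m + 1)) := hRy s (by omega)
  have hVsle : c.V s (c.A 0) ≤ c.V (m + 1) (c.B (m + 1)) := by
    rcases c.alphaHist s (by omega) with h | ⟨t, h1, h2, h3⟩
    · rw [h]; exact le_of_lt hc₁y
    · rw [h3]
      by_contra hgt
      push_neg at hgt
      exact hsmin t h1 ⟨by omega, h2, by omega⟩
  have hVslt : c.V s (c.A 0) < c.V (m + 1) (c.B (m + 1)) := by
    rcases lt_or_eq_of_le hVsle with h | h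
    · exact h
    · exfalso
      have : c.A 0 = R := (c.V s).injective (by rw [hVsR, h])
      omega
  have hcov := (c.cover s hsq).2 R (by rw [hs2]; exact hαR) (hRB s (by omega))
  apply hcov
  rw [hs2, hVsR]
  refine ⟨hVslt, ?_⟩
  have happ : c.V s (c.B s) = c.V (s + 1) (c.A 0) := by
    conv_rhs => rw [← hs2]
    exact (c.applyA s hsq).symm
  rw [happ]
  exact hs3

open Classical in
lemma claimG : ∀ i, 1 ≤ i → i < c.q → c.A i < c.A 0 →
    c.V i (c.A i) < c.V 0 (c.A 0) ∨ c.V i (c.A 0) < c.V i (c.A i) := by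
  intro i
  induction i using Nat.strong_induction_on with
  | _ i IH =>
    intro h1 hiq hAi
    by_contra hcon
    push_neg at hcon
    obtain ⟨hx1, hx2⟩ := hcon
    obtain ⟨m, rfl⟩ : ∃ m, i = m + 1 := ⟨i - 1, by omega⟩
    have h0q : 0 < c.q := by omega
    have hmq : m < c.q := by omega
    -- x < y
    have hxy : c.V (m + 1) (c.A (m + 1)) < c.V (m + 1) (c.B (m + 1)) :=
      (c.cover (m + 1) hiq).1
    -- x < Y
    have hxY : c.V (m + 1) (c.A (m + 1)) < c.V (m + 1) (c.A 0) := by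
      rcases lt_or_eq_of_le hx2 with h | h
      · exact h
      · exfalso
        have : c.A (m + 1) = c.A 0 := (c.V (m + 1)).injective h
        omega
    -- y < Y
    have hYy : c.V (m + 1) (c.B (m + 1)) < c.V (m + 1) (c.A 0) := by
      have hαβ : c.A 0 < c.B (m + 1) :=
        lt_of_le_of_lt (c.hAk 0 h0q) (c.hBk (m + 1) hiq)
      have hb := (c.cover (m + 1) hiq).2 (c.A 0) hAi hαβ
      have hne : c.V (m + 1) (c.A 0) ≠ c.V (m + 1) (c.B (m + 1)) := by
        intro h
        have : c.A 0 = c.B (m + 1) := (c.V (m + 1)).injective h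
        omega
      by_contra hcon2
      push_neg at hcon2
      exact hb ⟨hxY, by omega⟩
    -- β < B 0
    have hβb : c.B (m + 1) < c.B 0 := by
      have hle : c.B (m + 1) ≤ c.B 0 := c.Bmono (Nat.zero_le _) hiq
      rcases lt_or_eq_of_le hle with h | h
      · exact h
      · exfalso
        have h2 : c.V (m + 1) (c.B 0) ≤ c.V 1 (c.B 0) :=
          c.anti_gt (c.hBk 0 h0q) (by omega) (by omega)
        have h3 : c.V 1 (c.B 0) = c.V 0 (c.A 0) := c.applyB 0 h0q
        rw [h] at hxy
        omega
    have hc₁y : c.V 0 (c.A 0) < c.V (m + 1) (c.B (m + 1)) := by omega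
    by_cases hb : c.B m = c.B (m + 1)
    · -- y came from A m at step m
      have hym : c.V (m + 1) (c.B (m + 1)) = c.V m (c.A m) := by
        rw [← hb]
        exact c.applyB m hmq
      rcases lt_trichotomy (c.A m) (c.A 0) with hlt | heq | hgt
      · -- IH at m
        have hm1 : 1 ≤ m := by
          rcases Nat.eq_zero_or_pos m with rfl | h
          · omega
          · exact h
        rcases IH m (by omega) hm1 hmq hlt with h | h
        · omega
        · -- V m (A 0) = V (m+1) (A 0)
          have hαm : c.V (m + 1) (c.A 0) = c.V m (c.A 0) := by
            apply c.applyO m hmq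
            · omega
            · have := c.hBk m hmq
              have := c.hAk 0 h0q
              omega
          omega
      · -- A m = A 0 : P0
        have hm1 : 1 ≤ m := by
          rcases Nat.eq_zero_or_pos m with rfl | h
          · exfalso; omega
          · exact h
        have hrep : ∃ s, s < m ∧ c.A s = c.A m := ⟨0, by omega, heq.symm⟩
        rcases c.hP0 m hm1 (by omega) hrep with h | ⟨_, h2⟩
        · omega
        · omega
      · -- A m > A 0
        by_cases hrep : ∃ s, s < m ∧ c.A s = c.A m
        · have hm1 : 1 ≤ m := by
            obtain ⟨s, hs, _⟩ := hrep
            omega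
          rcases c.hP0 m hm1 (by omega) hrep with h | ⟨_, h2⟩
          · omega
          · omega
        · -- fresh
          push_neg at hrep
          apply c.claimG_final m (c.A m) hiq hgt ?_ ?_ hc₁y hYy
          · intro t ht
            have huntouch : c.V m (c.A m) = c.V t (c.A m) :=
              c.untouched_le (c.hAk m hmq) ht (by omega)
                (fun r hr1 hr2 => hrep r hr2)
            rw [← hym] at huntouch
            exact huntouch.symm
          · intro s hs
            exact lt_of_le_of_lt (c.hAk m hmq) (c.hBk s (by omega))
    · -- B m ≠ β : β untouched before step m+1
      have hβun : ∀ s, s ≤ m → c.B s ≠ c.B (m + 1) := by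
        intro s hs heq
        have h1 : c.B m ≤ c.B s := c.Bmono hs hmq
        have h2 : c.B (m + 1) ≤ c.B m := c.hP1 m hiq
        omega
      apply c.claimG_final m (c.B (m + 1)) hiq
        (lt_of_le_of_lt (c.hAk 0 h0q) (c.hBk (m + 1) hiq)) ?_ ?_ hc₁y hYy
      · intro t ht
        have huntouch : c.V (m + 1) (c.B (m + 1)) = c.V t (c.B (m + 1)) :=
          c.untouched_gt (c.hBk (m + 1) hiq) (by omega) (by omega)
            (fun r hr1 hr2 => hβun r (by omega))
        exact huntouch.symm
      · intro s hs
        have h1 : c.B (m + 1) ≤ c.B s := c.Bmono (by omega) hiq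
        have h2 := hβun s hs
        omega


lemma memA (hq : 1 ≤ c.q) : c.V 0 (c.A 0) < c.V c.q (c.A 0) := by
  have h1 : c.V 0 (c.A 0) < c.V 0 (c.B 0) := (c.cover 0 hq).1
  have h2 : c.V 1 (c.A 0) = c.V 0 (c.B 0) := c.applyA 0 hq
  have h3 : c.V 1 (c.A 0) ≤ c.V c.q (c.A 0) := c.mono_le (c.hAk 0 hq) hq le_rfl
  omega

open Classical in
lemma claimB (hq : 1 ≤ c.q) (a : ℕ) (hak : a ≤ k) (hane : a ≠ c.A 0)
    (hrise : c.V 0 a < c.V c.q a)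
    (h1 : c.V 0 (c.A 0) < c.V 0 a) (h2 : c.V 0 a < c.V 0 (c.B 0)) : False := by
  rcases lt_or_gt_of_ne hane with hlt | hgt
  case inr =>
    exact (c.cover 0 hq).2 a hgt (lt_of_le_of_lt hak (c.hBk 0 hq)) ⟨h1, h2⟩
  case inl =>
    have hex : ∃ t, t < c.q ∧ c.A t = a := by
      by_contra h
      push_neg at h
      have := c.untouched_le hak (Nat.zero_le _) le_rfl (fun r _ hr2 => h r hr2)
      omega
    obtain ⟨ht1, ht2⟩ := Nat.find_spec hex
    set t0 := Nat.find hex with ht0def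
    have hmin : ∀ s, s < t0 → ¬(s < c.q ∧ c.A s = a) := fun s hs => Nat.find_min hex hs
    have ht0pos : 1 ≤ t0 := by
      rcases Nat.eq_zero_or_pos t0 with h | h
      · exfalso
        rw [h] at ht2
        exact hane ht2.symm
      · exact h
    have huntouched : c.V t0 a = c.V 0 a :=
      c.untouched_le hak (Nat.zero_le _) (by omega)
        (fun r _ hr2 he => hmin r hr2 ⟨by omega, he⟩)
    rcases c.claimG t0 ht0pos ht1 (by rw [ht2]; exact hlt) with h | h
    · rw [ht2, huntouched] at h
      omega
    · rw [ht2, huntouched] at h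
      have := c.alphaGe hq ht0pos (le_of_lt ht1)
      omega

lemma first_b_eq (c₁ c₂ : KC k) (h0 : c₁.V 0 = c₂.V 0)
    (hw : c₁.V c₁.q = c₂.V c₂.q) (hq₁ : 1 ≤ c₁.q) (hq₂ : 1 ≤ c₂.q) :
    c₁.B 0 = c₂.B 0 := by
  rcases lt_trichotomy (c₁.B 0) (c₂.B 0) with h | h | h
  · exfalso
    have e1 : c₁.V c₁.q (c₂.B 0) = c₁.V 0 (c₂.B 0) := c₁.endBig (c₂.hBk 0 hq₂) h
    have e2 : c₂.V c₂.q (c₂.B 0) < c₂.V 0 (c₂.B 0) := c₂.endB_lt hq₂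
    rw [h0, hw] at e1
    omega
  · exact h
  · exfalso
    have e1 : c₂.V c₂.q (c₁.B 0) = c₂.V 0 (c₁.B 0) := c₂.endBig (c₁.hBk 0 hq₁) h
    have e2 : c₁.V c₁.q (c₁.B 0) < c₁.V 0 (c₁.B 0) := c₁.endB_lt hq₁
    rw [← h0, ← hw] at e1
    omega

lemma first_a_eq (c₁ c₂ : KC k) (h0 : c₁.V 0 = c₂.V 0)
    (hw : c₁.V c₁.q = c₂.V c₂.q) (hq₁ : 1 ≤ c₁.q) (hq₂ : 1 ≤ c₂.q)
    (hb : c₁.B 0 = c₂.B 0) : c₁.A 0 = c₂.A 0 := by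
  rcases lt_trichotomy (c₁.V 0 (c₁.A 0)) (c₁.V 0 (c₂.A 0)) with h | h | h
  · exfalso
    apply c₁.claimB hq₁ (c₂.A 0) (c₂.hAk 0 hq₂) ?_ ?_ h ?_
    · intro he
      rw [he] at h
      exact lt_irrefl _ h
    · have := c₂.memA hq₂
      rw [← h0, ← hw] at this
      exact this
    · have := (c₂.cover 0 hq₂).1
      rw [← h0, ← hb] at this
      exact this
  · exact (c₁.V 0).injective h
  · exfalso
    apply c₂.claimB hq₂ (c₁.A 0) (c₁.hAk 0 hq₁) ?_ ?_ ?_ ?_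
    · intro he
      rw [he] at h
      exact lt_irrefl _ h
    · have := c₁.memA hq₁
      rw [h0, hw] at this
      exact this
    · rw [← h0]
      exact h
    · rw [← h0, ← hb]
      exact (c₁.cover 0 hq₁).1

end KC

lemma chainEnd_cons (v : Equiv.Perm ℕ) (p : ℕ × ℕ) (l : List (ℕ × ℕ)) :
    chainEnd v (p :: l) = chainEnd (v * Equiv.swap p.1 p.2) l := rfl

lemma isKChain_facts (k : ℕ) : ∀ (L : List (ℕ × ℕ)) (v : Equiv.Perm ℕ), IsKChain k v L →
    ∀ t, t < L.length →
      (L.getD t (0,0)).1 ≤ k ∧ k < (L.getD t (0,0)).2 ∧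
      chainEnd v (L.take (t+1))
        = chainEnd v (L.take t) * Equiv.swap (L.getD t (0,0)).1 (L.getD t (0,0)).2 ∧
      len (chainEnd v (L.take (t+1))) = len (chainEnd v (L.take t)) + 1 := by
  intro L
  induction L with
  | nil => intro v _ t ht; simp at ht
  | cons p T ih =>
    intro v h t ht
    obtain ⟨h1, h2, h3, h4, h5⟩ := h
    cases t with
    | zero => exact ⟨h2, h3, rfl, h4⟩
    | succ t =>
      have hT := ih (v * Equiv.swap p.1 p.2) h5 t (by simpa using ht)
      simpa [List.take_succ_cons, List.getD_cons_succ, chainEnd_cons] using hT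

/-- package a list chain into the structure -/
def mkKC (k : ℕ) (v : Equiv.Perm ℕ) (L : List (ℕ × ℕ)) (h : IsKChain k v L)
    (h0 : CondP0 L) (h1 : CondP1 L) (hv : {i | v i ≠ i}.Finite) : KC k where
  q := L.length
  A t := (L.getD t (0, 0)).1
  B t := (L.getD t (0, 0)).2
  V t := chainEnd v (L.take t)
  hAk t ht := (isKChain_facts k L v h t ht).1
  hBk t ht := (isKChain_facts k L v h t ht).2.1
  hV t ht := (isKChain_facts k L v h t ht).2.2.1
  hL t ht := (isKChain_facts k L v h t ht).2.2.2
  hF := hv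
  hP1 t ht := h1 t ht
  hP0 t ha hb hrep := by
    have := h0 t ha hb hrep
    unfold prec at this
    exact this

lemma mkKC_end (k : ℕ) (v : Equiv.Perm ℕ) (L : List (ℕ × ℕ)) (h : IsKChain k v L)
    (h0 : CondP0 L) (h1 : CondP1 L) (hv : {i | v i ≠ i}.Finite) :
    (mkKC k v L h h0 h1 hv).V (mkKC k v L h h0 h1 hv).q = chainEnd v L := by
  show chainEnd v (L.take L.length) = chainEnd v L
  rw [List.take_length]

lemma condP1_tail {p : ℕ × ℕ} {T : List (ℕ × ℕ)} (h : CondP1 (p :: T)) : CondP1 T := by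
  intro t ht
  have := h (t + 1) (by simpa using ht)
  simpa using this

lemma condP0_tail {p : ℕ × ℕ} {T : List (ℕ × ℕ)} (h : CondP0 (p :: T)) : CondP0 T := by
  intro t h1 h2 hrep
  obtain ⟨s, hs1, hs2⟩ := hrep
  have := h (t + 1) (by omega) (by simp only [List.length_cons]; omega)
    ⟨s + 1, by omega, by simpa using hs2⟩
  simpa [List.getD_cons_succ] using this

lemma main_aux (k : ℕ) : ∀ L₁ : List (ℕ × ℕ), ∀ v w : Equiv.Perm ℕ,
    {i | v i ≠ i}.Finite →
    ∀ L₂ : List (ℕ × ℕ),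
    IsKChain k v L₁ → CondP0 L₁ → CondP1 L₁ → chainEnd v L₁ = w →
    IsKChain k v L₂ → CondP0 L₂ → CondP1 L₂ → chainEnd v L₂ = w →
    L₁ = L₂ := by
  intro L₁
  induction L₁ with
  | nil =>
    intro v w hv L₂ h₁ hP0₁ hP1₁ he₁ h₂ hP0₂ hP1₂ he₂
    cases L₂ with
    | nil => rfl
    | cons p' T' =>
      exfalso
      have hvw : v = w := he₁
      have hq₂ : 1 ≤ (mkKC k v (p' :: T') h₂ hP0₂ hP1₂ hv).q := by
        show 1 ≤ (p' :: T').length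
        simp
      have hlt := (mkKC k v (p' :: T') h₂ hP0₂ hP1₂ hv).endB_lt hq₂
      rw [mkKC_end] at hlt
      rw [he₂, ← hvw] at hlt
      exact lt_irrefl _ hlt
  | cons p T ih =>
    intro v w hv L₂ h₁ hP0₁ hP1₁ he₁ h₂ hP0₂ hP1₂ he₂
    cases L₂ with
    | nil =>
      exfalso
      have hvw : v = w := he₂
      have hq₁ : 1 ≤ (mkKC k v (p :: T) h₁ hP0₁ hP1₁ hv).q := by
        show 1 ≤ (p :: T).length
        simp
      have hlt := (mkKC k v (p :: T) h₁ hP0₁ hP1₁ hv).endB_lt hq₁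
      rw [mkKC_end] at hlt
      rw [he₁, ← hvw] at hlt
      exact lt_irrefl _ hlt
    | cons p' T' =>
      have hq₁ : 1 ≤ (mkKC k v (p :: T) h₁ hP0₁ hP1₁ hv).q := by
        show 1 ≤ (p :: T).length; simp
      have hq₂ : 1 ≤ (mkKC k v (p' :: T') h₂ hP0₂ hP1₂ hv).q := by
        show 1 ≤ (p' :: T').length; simp
      have h0 : (mkKC k v (p :: T) h₁ hP0₁ hP1₁ hv).V 0
          = (mkKC k v (p' :: T') h₂ hP0₂ hP1₂ hv).V 0 := rfl
      have hwend : (mkKC k v (p :: T) h₁ hP0₁ hP1₁ hv).V (mkKC k v (p :: T) h₁ hP0₁ hP1₁ hv).q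
          = (mkKC k v (p' :: T') h₂ hP0₂ hP1₂ hv).V (mkKC k v (p' :: T') h₂ hP0₂ hP1₂ hv).q := by
        rw [mkKC_end, mkKC_end, he₁, he₂]
      have hB := KC.first_b_eq _ _ h0 hwend hq₁ hq₂
      have hA := KC.first_a_eq _ _ h0 hwend hq₁ hq₂ hB
      have hpp : p = p' := Prod.ext hA hB
      subst hpp
      have hv' : {i | (v * Equiv.swap p.1 p.2) i ≠ i}.Finite :=
        Set.Finite.subset (hv.union ((Set.finite_singleton _).insert _))
          (supp_mul_swap _ _ _)
      have htails := ih (v * Equiv.swap p.1 p.2) w hv' T'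
        h₁.2.2.2.2 (condP0_tail hP0₁) (condP1_tail hP1₁) he₁
        h₂.2.2.2.2 (condP0_tail hP0₂) (condP1_tail hP1₂) he₂
      rw [htails]

end P0P1

/-- Uniqueness: between two permutations `v, w ∈ S_∞` there is at most one saturated chain
in the `k`-Bruhat order satisfying conditions (P0) and (P1). -/
theorem unique_P0_P1_chain (k : ℕ) (hk : 1 ≤ k) (v w : Equiv.Perm ℕ)
    (hv : {i | v i ≠ i}.Finite) (hv0 : v 0 = 0) :
    ∀ L₁ L₂ : List (ℕ × ℕ),
      IsKChain k v L₁ → CondP0 L₁ → CondP1 L₁ → chainEnd v L₁ = w →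
      IsKChain k v L₂ → CondP0 L₂ → CondP1 L₂ → chainEnd v L₂ = w →
      L₁ = L₂ := by
  intro L₁ L₂ a1 a2 a3 a4 a5 a6 a7 a8
  exact P0P1.main_aux k L₁ v w hv L₂ a1 a2 a3 a4 a5 a6 a7 a8

end
end

section
/- Let v ≤_k w in the k-Bruhat order. Then: (1) for all a ≤ k < b, v(a) ≤ w(a) and v(b) ≥ w(b); and (2) for all a < b with v(a) < v(b) and w(a) > w(b), one has a ≤ k < b. -/
noncomputable section

/-- The covering relation of the `k`-Bruhat order: `w = v·(a,b)` with `a ≤ k < b`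
(positions being positive integers) and `ℓ(w) = ℓ(v) + 1`. -/
def kCov (k : ℕ) (v w : Equiv.Perm ℕ) : Prop :=
  ∃ a b, 0 < a ∧ a ≤ k ∧ k < b ∧ w = v * Equiv.swap a b ∧ len w = len v + 1

/-- The `k`-Bruhat order `≤_k`: reflexive-transitive closure of its covering relation. -/
def kBruhat (k : ℕ) (v w : Equiv.Perm ℕ) : Prop := Relation.ReflTransGen (kCov k) v w

namespace KBaux

/-- The inversion set of a permutation of ℕ. -/
def Invs (x : Equiv.Perm ℕ) : Set (ℕ × ℕ) := {p : ℕ × ℕ | p.1 < p.2 ∧ x p.2 < x p.1}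

lemma len_eq (x : Equiv.Perm ℕ) : len x = (Invs x).ncard := rfl

lemma invs_finite (x : Equiv.Perm ℕ) (hx : {i | x i ≠ i}.Finite) : (Invs x).Finite := by
  obtain ⟨N, hN⟩ := hx.bddAbove
  have hmem : ∀ i, x i ≠ i → i ≤ N := fun i h => hN h
  apply Set.Finite.subset ((Set.finite_Iic N).prod (Set.finite_Iic N))
  rintro ⟨i, j⟩ hz
  obtain ⟨hij, hinv⟩ : i < j ∧ x j < x i := hz
  simp only [Set.mem_prod, Set.mem_Iic]
  have hj : j ≤ N := by
    by_contra hj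
    have hxj : x j = j := by
      by_contra h
      exact hj (hmem j h)
    rw [hxj] at hinv
    have hxi : x i ≠ i := by omega
    have h2 : x (x i) ≠ x i := fun h => hxi (x.injective h)
    have := hmem _ h2
    omega
  exact ⟨by omega, hj⟩

/-- The map used to inject inversions of `u` into inversions of `u * swap p q`. -/
def phi (p q : ℕ) (z : ℕ × ℕ) : ℕ × ℕ :=
  if Equiv.swap p q z.1 < Equiv.swap p q z.2 then (Equiv.swap p q z.1, Equiv.swap p q z.2) else z

lemma phi_mapsTo (u : Equiv.Perm ℕ) (p q : ℕ) (hpq : p < q) (hu : u p < u q) :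
    Set.MapsTo (phi p q) (Invs u) (Invs (u * Equiv.swap p q)) := by
  rintro ⟨i, j⟩ hz
  obtain ⟨hij, hinv⟩ : i < j ∧ u j < u i := hz
  have hws : ∀ x, (u * Equiv.swap p q) (Equiv.swap p q x) = u x := fun x => by
    rw [Equiv.Perm.mul_apply, Equiv.swap_apply_self]
  by_cases h : Equiv.swap p q i < Equiv.swap p q j
  · have he : phi p q (i, j) = (Equiv.swap p q i, Equiv.swap p q j) := if_pos h
    rw [he]
    exact ⟨h, by rw [hws, hws]; exact hinv⟩
  · have he : phi p q (i, j) = (i, j) := if_neg h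
    rw [he]
    refine ⟨hij, ?_⟩
    show (u * Equiv.swap p q) j < (u * Equiv.swap p q) i
    rw [Equiv.Perm.mul_apply, Equiv.Perm.mul_apply]
    by_cases hip : i = p
    · subst hip
      by_cases hjq : j = q
      · subst hjq
        omega
      · have hjp : j ≠ i := by omega
        rw [Equiv.swap_apply_left, Equiv.swap_apply_of_ne_of_ne hjp hjq]
        omega
    · by_cases hiq : i = q
      · exfalso
        subst hiq
        have hjp : j ≠ p := by omega
        have hjq : j ≠ i := by omega
        rw [Equiv.swap_apply_right, Equiv.swap_apply_of_ne_of_ne hjp hjq] at h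
        omega
      · by_cases hjp : j = p
        · exfalso
          subst hjp
          rw [Equiv.swap_apply_left, Equiv.swap_apply_of_ne_of_ne hip hiq] at h
          omega
        · by_cases hjq : j = q
          · subst hjq
            rw [Equiv.swap_apply_right, Equiv.swap_apply_of_ne_of_ne hip hiq]
            omega
          · exfalso
            rw [Equiv.swap_apply_of_ne_of_ne hip hiq,
              Equiv.swap_apply_of_ne_of_ne hjp hjq] at h
            omega

lemma phi_injOn (u : Equiv.Perm ℕ) (p q : ℕ) : Set.InjOn (phi p q) (Invs u) := by
  rintro ⟨i1, j1⟩ hz1 ⟨i2, j2⟩ hz2 heq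
  obtain ⟨h1, _⟩ : i1 < j1 ∧ u j1 < u i1 := hz1
  obtain ⟨h2, _⟩ : i2 < j2 ∧ u j2 < u i2 := hz2
  unfold phi at heq
  by_cases c1 : Equiv.swap p q i1 < Equiv.swap p q j1
  · by_cases c2 : Equiv.swap p q i2 < Equiv.swap p q j2
    · rw [if_pos c1, if_pos c2] at heq
      rw [Prod.mk.injEq] at heq
      obtain ⟨e1, e2⟩ := heq
      have e1' : i1 = i2 := (Equiv.swap p q).injective e1
      have e2' : j1 = j2 := (Equiv.swap p q).injective e2
      rw [e1', e2']
    · rw [if_pos c1, if_neg c2] at heq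
      rw [Prod.mk.injEq] at heq
      obtain ⟨e1, e2⟩ := heq
      exfalso
      rw [← e1, ← e2, Equiv.swap_apply_self, Equiv.swap_apply_self] at c2
      exact c2 h1
  · by_cases c2 : Equiv.swap p q i2 < Equiv.swap p q j2
    · rw [if_neg c1, if_pos c2] at heq
      rw [Prod.mk.injEq] at heq
      obtain ⟨e1, e2⟩ := heq
      exfalso
      rw [e1, e2, Equiv.swap_apply_self, Equiv.swap_apply_self] at c1
      exact c1 h2
    · rw [if_neg c1, if_neg c2] at heq
      exact heq

lemma phi_notMem (u : Equiv.Perm ℕ) (p q x y : ℕ)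
    (h1 : ¬ (x < y ∧ u y < u x)) (h2 : ¬ (Equiv.swap p q x < Equiv.swap p q y)) :
    (x, y) ∉ phi p q '' Invs u := by
  rintro ⟨⟨i, j⟩, hz, heq⟩
  obtain ⟨hij, hinv⟩ : i < j ∧ u j < u i := hz
  unfold phi at heq
  by_cases c : Equiv.swap p q i < Equiv.swap p q j
  · rw [if_pos c] at heq
    rw [Prod.mk.injEq] at heq
    obtain ⟨e1, e2⟩ := heq
    rw [← e1, ← e2, Equiv.swap_apply_self, Equiv.swap_apply_self] at h2
    exact h2 hij
  · rw [if_neg c] at heq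
    rw [Prod.mk.injEq] at heq
    obtain ⟨e1, e2⟩ := heq
    exact h1 ⟨e1 ▸ e2 ▸ hij, e1 ▸ e2 ▸ hinv⟩

lemma len_le_of_lt (u : Equiv.Perm ℕ) (p q : ℕ) (hpq : p < q) (hu : u p < u q)
    (hfin : (Invs (u * Equiv.swap p q)).Finite) :
    len u ≤ len (u * Equiv.swap p q) := by
  rw [len_eq, len_eq]
  exact Set.ncard_le_ncard_of_injOn (phi p q) (phi_mapsTo u p q hpq hu) (phi_injOn u p q) hfin

lemma len_add3 (u : Equiv.Perm ℕ) (p q c : ℕ) (hpc : p < c) (hcq : c < q)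
    (hu : u p < u q) (h1 : u p < u c) (h2 : u c < u q)
    (hfin : (Invs (u * Equiv.swap p q)).Finite) :
    len u + 3 ≤ len (u * Equiv.swap p q) := by
  have hpq : p < q := hpc.trans hcq
  set w := u * Equiv.swap p q with hw
  have wp : w p = u q := by rw [hw, Equiv.Perm.mul_apply, Equiv.swap_apply_left]
  have wq : w q = u p := by rw [hw, Equiv.Perm.mul_apply, Equiv.swap_apply_right]
  have wc : w c = u c := by
    rw [hw, Equiv.Perm.mul_apply,
      Equiv.swap_apply_of_ne_of_ne (by omega : c ≠ p) (by omega : c ≠ q)]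
  set S := phi p q '' Invs u with hS
  set T : Set (ℕ × ℕ) := insert (p, q) (insert (p, c) {(c, q)}) with hT
  have hSsub : S ⊆ Invs w := (phi_mapsTo u p q hpq hu).image_subset
  have hTsub : T ⊆ Invs w := by
    intro z hz
    simp only [hT, Set.mem_insert_iff, Set.mem_singleton_iff] at hz
    rcases hz with rfl | rfl | rfl
    · exact ⟨hpq, by rw [wp, wq]; omega⟩
    · exact ⟨hpc, by rw [wp, wc]; omega⟩
    · exact ⟨hcq, by rw [wq, wc]; omega⟩
  have hdisj : Disjoint S T := by
    rw [Set.disjoint_right]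
    intro z hz
    simp only [hT, Set.mem_insert_iff, Set.mem_singleton_iff] at hz
    rcases hz with rfl | rfl | rfl
    · exact phi_notMem u p q p q (by omega) (by
        rw [Equiv.swap_apply_left, Equiv.swap_apply_right]; omega)
    · exact phi_notMem u p q p c (by omega) (by
        rw [Equiv.swap_apply_left,
          Equiv.swap_apply_of_ne_of_ne (by omega : c ≠ p) (by omega : c ≠ q)]; omega)
    · exact phi_notMem u p q c q (by omega) (by
        rw [Equiv.swap_apply_right,
          Equiv.swap_apply_of_ne_of_ne (by omega : c ≠ p) (by omega : c ≠ q)]; omega)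
  have hSfin : S.Finite := hfin.subset hSsub
  have hTfin : T.Finite :=
    ((Set.finite_singleton ((c, q) : ℕ × ℕ)).insert (p, c)).insert (p, q)
  have hT3 : T.ncard = 3 := by
    rw [hT, Set.ncard_insert_of_notMem (by
        simp only [Set.mem_insert_iff, Set.mem_singleton_iff, Prod.mk.injEq, not_or]
        omega) ((Set.finite_singleton _).insert _),
      Set.ncard_insert_of_notMem (by
        simp only [Set.mem_singleton_iff, Prod.mk.injEq, not_and]
        omega) (Set.finite_singleton _),
      Set.ncard_singleton]
  have hScard : S.ncard = (Invs u).ncard := by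
    rw [hS, Set.ncard_image_of_injOn (phi_injOn u p q)]
  have hUnion : (S ∪ T).ncard = S.ncard + T.ncard := Set.ncard_union_eq hdisj hSfin hTfin
  have hle : (S ∪ T).ncard ≤ (Invs w).ncard :=
    Set.ncard_le_ncard (Set.union_subset hSsub hTsub) hfin
  rw [len_eq, len_eq]
  omega

lemma cov_lt {u w : Equiv.Perm ℕ} {p q : ℕ} (hpq : p < q) (hw : w = u * Equiv.swap p q)
    (hlen : len w = len u + 1) (hfinu : (Invs u).Finite) : u p < u q := by
  rcases lt_trichotomy (u p) (u q) with h | h | h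
  · exact h
  · exact absurd (u.injective h) (by omega)
  · exfalso
    have hwu : w * Equiv.swap p q = u := by
      rw [hw, mul_assoc, Equiv.swap_mul_self, mul_one]
    have e1 : w p = u q := by rw [hw, Equiv.Perm.mul_apply, Equiv.swap_apply_left]
    have e2 : w q = u p := by rw [hw, Equiv.Perm.mul_apply, Equiv.swap_apply_right]
    have hwp : w p < w q := by rw [e1, e2]; exact h
    have hle := len_le_of_lt w p q hpq hwp (by rw [hwu]; exact hfinu)
    rw [hwu] at hle
    omega

lemma cov_noM {u w : Equiv.Perm ℕ} {p q : ℕ} (hpq : p < q) (hw : w = u * Equiv.swap p q)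
    (hlen : len w = len u + 1) (hfinw : (Invs w).Finite) (hu : u p < u q) :
    ∀ c, p < c → c < q → ¬ (u p < u c ∧ u c < u q) := by
  rintro c hpc hcq ⟨h1, h2⟩
  have h3 := len_add3 u p q c hpc hcq hu h1 h2 (hw ▸ hfinw)
  rw [← hw] at h3
  omega

end KBaux

open KBaux in
/-- One direction of the Bergeron–Sottile characterization of the `k`-Bruhat order:
if `v ≤_k w` then (1) `v(a) ≤ w(a)` and `v(b) ≥ w(b)` for all `a ≤ k < b`, and
(2) whenever `a < b` with `v(a) < v(b)` and `w(a) > w(b)`, one has `a ≤ k < b`. -/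
theorem kBruhat_characterization_forward (k : ℕ) (hk : 1 ≤ k) (v w : Equiv.Perm ℕ)
    (hv : {i | v i ≠ i}.Finite) (hv0 : v 0 = 0) (h : kBruhat k v w) :
    (∀ a b, 0 < a → a ≤ k → k < b → v a ≤ w a ∧ w b ≤ v b) ∧
    (∀ a b, 0 < a → a < b → v a < v b → w b < w a → a ≤ k ∧ k < b) := by
  suffices H : {i | w i ≠ i}.Finite ∧
      ((∀ a b, 0 < a → a ≤ k → k < b → v a ≤ w a ∧ w b ≤ v b) ∧
       (∀ a b, 0 < a → a < b → v a < v b → w b < w a → a ≤ k ∧ k < b)) by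
    exact H.2
  induction h with
  | refl =>
    exact ⟨hv, fun a b _ _ _ => ⟨le_rfl, le_rfl⟩,
      fun a b _ _ h1 h2 => absurd h2 (by omega)⟩
  | @tail u w' hvu hcov ih =>
    obtain ⟨hfinu, ih1, ih2⟩ := ih
    obtain ⟨p, q, hp0, hpk, hkq, hweq, hlen⟩ := hcov
    have hpq : p < q := by omega
    have hInvu : (Invs u).Finite := invs_finite u hfinu
    have hupq : u p < u q := cov_lt hpq hweq hlen hInvu
    have hfinw : {i | w' i ≠ i}.Finite := by
      apply (hfinu.union ((Set.finite_singleton q).insert p)).subset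
      intro i hi
      by_cases hip : i = p
      · subst hip; simp
      · by_cases hiq : i = q
        · subst hiq; simp
        · left
          rw [Set.mem_setOf_eq, hweq, Equiv.Perm.mul_apply,
            Equiv.swap_apply_of_ne_of_ne hip hiq] at hi
          exact hi
    have wp : w' p = u q := by rw [hweq, Equiv.Perm.mul_apply, Equiv.swap_apply_left]
    have wq : w' q = u p := by rw [hweq, Equiv.Perm.mul_apply, Equiv.swap_apply_right]
    have wother : ∀ x, x ≠ p → x ≠ q → w' x = u x := fun x hx1 hx2 => by
      rw [hweq, Equiv.Perm.mul_apply, Equiv.swap_apply_of_ne_of_ne hx1 hx2]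
    have hnoM := cov_noM hpq hweq hlen (invs_finite w' hfinw) hupq
    refine ⟨hfinw, ?_, ?_⟩
    · intro a b ha hak hkb
      constructor
      · by_cases hap : a = p
        · subst hap
          rw [wp]
          have hva := (ih1 a q ha hak hkq).1
          omega
        · have haq : a ≠ q := by omega
          rw [wother a hap haq]
          exact (ih1 a b ha hak hkb).1
      · by_cases hbq : b = q
        · subst hbq
          rw [wq]
          have hvb := (ih1 p b hp0 hpk hkb).2
          omega
        · have hbp : b ≠ p := by omega
          rw [wother b hbp hbq]
          exact (ih1 a b ha hak hkb).2
    · intro a b ha hab hvab hwba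
      by_cases hap : a = p
      · subst hap
        by_cases hbq : b = q
        · subst hbq; exact ⟨hpk, hkq⟩
        · have hbp : b ≠ a := by omega
          rw [wp, wother b hbp hbq] at hwba
          rcases lt_trichotomy (u b) (u a) with hcase | hcase | hcase
          · exact ⟨hpk, (ih2 a b ha hab hvab hcase).2⟩
          · exact absurd (u.injective hcase) hbp
          · by_cases hblt : b < q
            · exact absurd ⟨hcase, hwba⟩ (hnoM b hab hblt)
            · exact ⟨hpk, by omega⟩
      · by_cases haq : a = q
        · subst haq
          have hbp : b ≠ p := by omega
          have hbq : b ≠ a := by omega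
          rw [wq, wother b hbp hbq] at hwba
          have hba : u b < u a := by omega
          exact ih2 a b ha hab hvab hba
        · by_cases hbp : b = p
          · subst hbp
            rw [wp, wother a hap haq] at hwba
            have hba : u b < u a := by omega
            exact ih2 a b ha hab hvab hba
          · by_cases hbq : b = q
            · subst hbq
              rw [wother a hap haq, wq] at hwba
              refine ⟨?_, hkq⟩
              rcases lt_trichotomy (u a) (u b) with hcase | hcase | hcase
              · by_cases hpa : p < a
                · exact absurd ⟨hwba, hcase⟩ (hnoM a hpa hab)
                · omega
              · exact absurd (u.injective hcase) haq
              · exact (ih2 a b ha hab hvab hcase).1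
            · rw [wother a hap haq, wother b hbp hbq] at hwba
              exact ih2 a b ha hab hvab hwba

end
end

section
/- For permutations v, w in S_n, if (1) v(a) ≤ w(a) and v(b) ≥ w(b) hold for all a ≤ k < b, and (2) whenever a < b with v(a) < v(b) and w(a) > w(b) one has a ≤ k < b, then v ≤_k w in the k-Bruhat order. -/
noncomputable section

/-!
Induct on the deficit `∑_{0 < i ≤ k} (w i - v i)`. If `v ≠ w`, some position `a ≤ k` has
`v a < w a`; take one with `v a` largest (a pivot). Among the positions `b > k` with
`v a < v b ≤ w a` and `w b < v b` (there is one: `v⁻¹ (w a)`), take one with `v b` smallest.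
Minimality forces `w b ≤ v a` and leaves no value of `v` strictly between `v a` and `v b` at a
position between `a` and `b`, so `v · (a, b)` covers `v` in the `k`-Bruhat order, still
satisfies (1) and (2), and has smaller deficit.

The length goes up by exactly one because applying the swap to the pairs whose order it
preserves, and fixing the other pairs, is an involution that matches the inversions of
`v · (a, b)` other than `(a, b)` with those of `v`.
-/

open Equiv Function

theorem Equiv.Perm.eq_of_forall_apply_le {α : Type*} [LinearOrder α] [WellFoundedLT α]
    {σ τ : Perm α} (h : ∀ x, σ x ≤ τ x) : σ = τ := by
  suffices ∀ y, σ (τ.symm y) = y by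
    ext x; simpa using this (τ x)
  intro y
  induction y using WellFoundedLT.induction with
  | _ y ih =>
    refine (h (τ.symm y)).lt_or_eq.elim (fun hlt => ?_) (by simp)
    rw [apply_symm_apply] at hlt
    exact absurd (τ.symm.injective (σ.injective (ih _ hlt))) hlt.ne

theorem Equiv.Perm.apply_le_of_le {u : Perm ℕ} {n p : ℕ} (hu : ∀ i, n < i → u i = i)
    (hp : p ≤ n) : u p ≤ n := by
  by_contra! h
  have := u.injective (hu _ h)
  omega

def inversions (u : Perm ℕ) : Set (ℕ × ℕ) := {p | p.1 < p.2 ∧ u p.2 < u p.1}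

theorem len_eq_ncard_inversions (u : Perm ℕ) : len u = (inversions u).ncard := rfl

theorem inversions_finite {u : Perm ℕ} {n : ℕ} (hu : ∀ i, n < i → u i = i) :
    (inversions u).Finite := by
  refine ((Set.finite_Iic n).prod (Set.finite_Iic n)).subset ?_
  rintro ⟨x, y⟩ ⟨hxy, hinv⟩
  dsimp only at hxy hinv
  have hy : y ≤ n := by
    by_contra! hy
    rw [hu y hy] at hinv
    rcases le_or_gt x n with hx | hx
    · have := u.apply_le_of_le hu hx
      omega
    · rw [hu x hx] at hinv
      omega
  exact ⟨Set.mem_Iic.2 (by omega), Set.mem_Iic.2 hy⟩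

def mapOrderPreserved {α : Type*} [LinearOrder α] (f : α → α) (p : α × α) : α × α :=
  if (p.1 < p.2 ↔ f p.1 < f p.2) then (f p.1, f p.2) else p

theorem Function.Involutive.mapOrderPreserved {α : Type*} [LinearOrder α] {f : α → α}
    (hf : Involutive f) : Involutive (mapOrderPreserved f) := by
  rintro ⟨x, y⟩
  by_cases h : x < y ↔ f x < f y
  · simp [_root_.mapOrderPreserved, h, hf x, hf y]
  · simp [_root_.mapOrderPreserved, h]

theorem inversions_mul_swap_sdiff {v : Perm ℕ} {a b : ℕ} (hab : a < b) (hvab : v a < v b)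
    (gap : ∀ c, a < c → c < b → v c < v a ∨ v b < v c) :
    inversions (v * swap a b) \ {(a, b)} = mapOrderPreserved (swap a b) ⁻¹' inversions v := by
  ext ⟨x, y⟩
  have := gap x
  have := gap y
  simp only [mapOrderPreserved, inversions, Set.mem_sdiff, Set.mem_ofPred_eq,
    Set.mem_singleton_iff, Prod.mk.injEq, Perm.mul_apply, swap_apply_def, Set.mem_preimage]
  split_ifs <;> grind

theorem len_mul_swap {v : Perm ℕ} {a b : ℕ} (hfin : (inversions v).Finite) (hab : a < b)
    (hvab : v a < v b) (gap : ∀ c, a < c → c < b → v c < v a ∨ v b < v c) :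
    len (v * swap a b) = len v + 1 := by
  have hg : Involutive (mapOrderPreserved (swap a b)) :=
    Involutive.mapOrderPreserved (swap_apply_self a b)
  have hmem : (a, b) ∈ inversions (v * swap a b) := by
    simpa [inversions] using ⟨hab, hvab⟩
  have hfin' : (inversions (v * swap a b)).Finite := by
    rw [← Set.insert_sdiff_self_of_mem hmem, inversions_mul_swap_sdiff hab hvab gap]
    exact (hfin.preimage hg.injective.injOn).insert _
  rw [len_eq_ncard_inversions, len_eq_ncard_inversions,
    ← Set.ncard_sdiff_singleton_add_one hmem hfin', inversions_mul_swap_sdiff hab hvab gap,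
    Set.ncard_preimage_of_injective_subset_range hg.injective (by simp [hg.surjective.range_eq])]

def deficit (k : ℕ) (v w : Perm ℕ) : ℕ := ∑ i ∈ Finset.Ioc 0 k, (w i - v i)

theorem deficit_mul_swap_lt {k a b : ℕ} {v w : Perm ℕ} (ha : 0 < a) (hak : a ≤ k) (hkb : k < b)
    (hvab : v a < v b) (hvba : v b ≤ w a) : deficit k (v * swap a b) w < deficit k v w := by
  refine Finset.sum_lt_sum (fun i hi => ?_) ⟨a, Finset.mem_Ioc.2 ⟨ha, hak⟩, ?_⟩
  · rcases eq_or_ne i a with rfl | hia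
    · simp only [Perm.mul_apply, swap_apply_left]
      omega
    · have hib : i ≠ b := by simp only [Finset.mem_Ioc] at hi; omega
      rw [Perm.mul_apply, swap_apply_of_ne_of_ne hia hib]
  · simp only [Perm.mul_apply, swap_apply_left]
    omega

namespace KBruhat

structure Criterion (k n : ℕ) (v w : Perm ℕ) : Prop where
  apply_zero : v 0 = 0
  apply_of_gt : ∀ i, n < i → v i = i
  le_of_le : ∀ a, 0 < a → a ≤ k → v a ≤ w a
  ge_of_gt : ∀ b, k < b → w b ≤ v b
  le_lt_of_inv : ∀ a b, 0 < a → a < b → v a < v b → w b < w a → a ≤ k ∧ k < b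

structure IsPivot (k : ℕ) (v w : Perm ℕ) (a : ℕ) : Prop where
  pos : 0 < a
  le : a ≤ k
  apply_lt : v a < w a
  apply_le_of_apply_lt : ∀ c, 0 < c → c ≤ k → v c < w c → v c ≤ v a

def partners (k : ℕ) (v w : Perm ℕ) (a : ℕ) : Set ℕ :=
  {b | k < b ∧ v a < v b ∧ v b ≤ w a ∧ w b < v b}

variable {k n : ℕ} {v w : Perm ℕ} {a b c : ℕ}

theorem Criterion.exists_isPivot (hw0 : w 0 = 0) (h : Criterion k n v w) (hvw : v ≠ w) :
    ∃ a, IsPivot k v w a := by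
  obtain ⟨a₀, ha₀⟩ : ((Finset.Ioc 0 k).filter fun a => v a < w a).Nonempty := by
    by_contra! hempty
    refine hvw (Perm.eq_of_forall_apply_le fun x => ?_).symm
    rcases Nat.eq_zero_or_pos x with rfl | hx
    · rw [hw0, h.apply_zero]
    rcases le_or_gt x k with hxk | hxk
    · have : x ∉ (Finset.Ioc 0 k).filter fun a => v a < w a := by simp [hempty]
      simpa [hx, hxk] using this
    · exact h.ge_of_gt x hxk
  obtain ⟨a, ha, hmax⟩ := Finset.exists_max_image _ v ⟨a₀, ha₀⟩
  simp only [Finset.mem_filter, Finset.mem_Ioc] at ha hmax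
  exact ⟨a, ⟨ha.1.1, ha.1.2, ha.2, fun c hc hck hvc => hmax c ⟨⟨hc, hck⟩, hvc⟩⟩⟩

theorem IsPivot.apply_eq_of_lt (h : Criterion k n v w) (ha : IsPivot k v w a) (hck : c ≤ k)
    (hac : v a < v c) : w c = v c := by
  have hc : 0 < c := Nat.pos_of_ne_zero fun hc => by rw [hc, h.apply_zero] at hac; omega
  have := ha.apply_le_of_apply_lt c hc hck
  have := h.le_of_le c hc hck
  omega

theorem IsPivot.partners_nonempty (h : Criterion k n v w) (ha : IsPivot k v w a) :
    (partners k v w a).Nonempty := by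
  set b := v.symm (w a)
  have hvb : v b = w a := v.apply_symm_apply _
  have hb : b ≠ a := fun hba => by rw [hba] at hvb; exact ha.apply_lt.ne hvb
  have hkb : k < b := by
    by_contra! hbk
    exact hb (w.injective (by rw [ha.apply_eq_of_lt h hbk (hvb ▸ ha.apply_lt), hvb]))
  have hwb : w b < v b := (h.ge_of_gt b hkb).lt_of_ne fun hwb => hb (w.injective (hwb.trans hvb))
  exact ⟨b, hkb, hvb ▸ ha.apply_lt, hvb.le, hwb⟩

theorem IsPivot.apply_le_of_isMinOn (h : Criterion k n v w) (ha : IsPivot k v w a)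
    (hb : b ∈ partners k v w a) (hmin : IsMinOn v (partners k v w a) b) : w b ≤ v a := by
  obtain ⟨hkb, hab, hba, hwb⟩ := hb
  by_contra! hawb
  set c := v.symm (w b)
  have hvc : v c = w b := v.apply_symm_apply _
  have hcb : c ≠ b := fun hcb => by rw [hcb] at hvc; exact hwb.ne' hvc
  have hkc : k < c := by
    by_contra! hck
    exact hcb (w.injective (by rw [ha.apply_eq_of_lt h hck (hvc ▸ hawb), hvc]))
  have hwc : w c < v c :=
    (h.ge_of_gt c hkc).lt_of_ne fun hwc => hcb (w.injective (hwc.trans hvc))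
  have := isMinOn_iff.1 hmin c ⟨hkc, hvc ▸ hawb, by omega, hwc⟩
  omega

theorem IsPivot.apply_lt_or_lt_apply (h : Criterion k n v w) (ha : IsPivot k v w a)
    (hb : b ∈ partners k v w a) (hmin : IsMinOn v (partners k v w a) b) (hac : a < c) (hcb : c < b) :
    v c < v a ∨ v b < v c := by
  have hwb := ha.apply_le_of_isMinOn h hb hmin
  obtain ⟨hkb, hab, hba, -⟩ := hb
  by_contra! hc
  have hac' : v a < v c := hc.1.lt_of_ne (v.injective.ne hac.ne)
  have hcb' : v c < v b := hc.2.lt_of_ne (v.injective.ne hcb.ne)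
  rcases le_or_gt c k with hck | hkc
  · have := h.le_lt_of_inv a c ha.pos hac hac' (by rw [ha.apply_eq_of_lt h hck hac']; omega)
    omega
  · rcases (h.ge_of_gt c hkc).lt_or_eq with hwc | hwc
    · have := isMinOn_iff.1 hmin c ⟨hkc, hac', by omega, hwc⟩
      omega
    · have := h.le_lt_of_inv c b (by omega) hcb hcb' (by omega)
      omega

theorem IsPivot.le_lt_of_inv_mul_swap (h : Criterion k n v w) (ha : IsPivot k v w a)
    (hb : b ∈ partners k v w a) (hmin : IsMinOn v (partners k v w a) b) (p q : ℕ) (hp : 0 < p)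
    (hpq : p < q) (hv : (v * swap a b) p < (v * swap a b) q) (hw : w q < w p) :
    p ≤ k ∧ k < q := by
  have hwb := ha.apply_le_of_isMinOn h hb hmin
  obtain ⟨hkb, hab, hba, -⟩ := hb
  have hak := ha.le
  simp only [Perm.mul_apply, swap_apply_def] at hv
  rcases eq_or_ne p a with rfl | hpa
  · rcases eq_or_ne q b with rfl | hqb
    · simp only [if_true, hpq.ne', if_false] at hv
      omega
    · simp only [if_true, hpq.ne', hqb, if_false] at hv
      exact h.le_lt_of_inv p q hp hpq (by omega) hw
  rcases eq_or_ne p b with rfl | hpb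
  · simp only [hpa, hpq.ne', show q ≠ a by omega, if_false, if_true] at hv
    exfalso
    rcases (v.injective.ne hpq.ne').lt_or_gt with hvq | hvq
    · have := isMinOn_iff.1 hmin q ⟨hkb.trans hpq, hv, by omega, by omega⟩
      omega
    · have := h.le_lt_of_inv p q (by omega) hpq hvq hw
      omega
  rcases eq_or_ne q a with rfl | hqa
  · simp only [hpa, hpb, if_true, if_false] at hv
    exfalso
    rcases (v.injective.ne hpq.ne).lt_or_gt with hvp | hvp
    · have := h.le_lt_of_inv p q hp hpq hvp hw
      omega
    · have := ha.apply_eq_of_lt h (by omega) hvp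
      omega
  rcases eq_or_ne q b with rfl | hqb
  · simp only [hpa, hpb, hqa, if_true, if_false] at hv
    exact ⟨(h.le_lt_of_inv p q hp hpq (by omega) hw).1, hkb⟩
  · simp only [hpa, hpb, hqa, hqb, if_false] at hv
    exact h.le_lt_of_inv p q hp hpq hv hw

theorem IsPivot.criterion_mul_swap (hw : ∀ i, n < i → w i = i) (h : Criterion k n v w)
    (ha : IsPivot k v w a) (hb : b ∈ partners k v w a) (hmin : IsMinOn v (partners k v w a) b) :
    Criterion k n (v * swap a b) w := by
  have hwb := ha.apply_le_of_isMinOn h hb hmin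
  obtain ⟨hkb, hab, hba, -⟩ := hb
  have hak := ha.le
  have han : a ≤ n := by
    by_contra! han
    exact ha.apply_lt.ne (by rw [h.apply_of_gt a han, hw a han])
  have hbn : b ≤ n := by
    by_contra! hbn
    have := w.apply_le_of_le hw han
    rw [h.apply_of_gt b hbn] at hba
    omega
  have hv' : ∀ i, i ≠ a → i ≠ b → (v * swap a b) i = v i := fun i hia hib => by
    rw [Perm.mul_apply, swap_apply_of_ne_of_ne hia hib]
  refine ⟨?_, fun i hi => ?_, fun i hi hik => ?_, fun i hik => ?_,
    ha.le_lt_of_inv_mul_swap h ⟨hkb, hab, hba, hwb.trans_lt hab⟩ hmin⟩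
  · rw [hv' 0 ha.pos.ne (by omega), h.apply_zero]
  · rw [hv' i (by omega) (by omega), h.apply_of_gt i hi]
  · rcases eq_or_ne i a with rfl | hia
    · simpa using hba
    · rw [hv' i hia (by omega)]
      exact h.le_of_le i hi hik
  · rcases eq_or_ne i b with rfl | hib
    · simpa using hwb
    · rw [hv' i (by omega) hib]
      exact h.ge_of_gt i hik

theorem Criterion.exists_kCov (hw0 : w 0 = 0) (hw : ∀ i, n < i → w i = i)
    (h : Criterion k n v w) (hvw : v ≠ w) :
    ∃ v', kCov k v v' ∧ Criterion k n v' w ∧ deficit k v' w < deficit k v w := by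
  obtain ⟨a, ha⟩ := h.exists_isPivot hw0 hvw
  set b := argminOn v (partners k v w a) (ha.partners_nonempty h)
  have hb : b ∈ partners k v w a := argminOn_mem v _ _
  have hmin : IsMinOn v (partners k v w a) b := isMinOn_iff.2 fun c hc => argminOn_le v _ hc
  obtain ⟨hkb, hab, hba, -⟩ := id hb
  have hlen := len_mul_swap (inversions_finite h.apply_of_gt) (ha.le.trans_lt hkb) hab
    fun c hac hcb => ha.apply_lt_or_lt_apply h hb hmin hac hcb
  exact ⟨_, ⟨a, b, ha.pos, ha.le, hkb, rfl, hlen⟩, ha.criterion_mul_swap hw h hb hmin,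
    deficit_mul_swap_lt ha.pos ha.le hkb hab hba⟩

theorem kBruhat_of_criterion (hw0 : w 0 = 0) (hw : ∀ i, n < i → w i = i)
    (h : Criterion k n v w) : kBruhat k v w := by
  induction hd : deficit k v w using Nat.strong_induction_on generalizing v with
  | _ d ih =>
    by_cases hvw : v = w
    · exact hvw ▸ Relation.ReflTransGen.refl
    obtain ⟨v', hcov, h', hlt⟩ := h.exists_kCov hw0 hw hvw
    exact .head hcov (ih _ (hd ▸ hlt) h' rfl)

end KBruhat

theorem kBruhat_characterization_backward_general (n k : ℕ) (hk : 1 ≤ k)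
    (v w : Equiv.Perm ℕ)
    (hv0 : v 0 = 0) (hw0 : w 0 = 0)
    (hv : ∀ i, n < i → v i = i) (hw : ∀ i, n < i → w i = i)
    (h1 : ∀ a b, 0 < a → a ≤ k → k < b → v a ≤ w a ∧ w b ≤ v b)
    (h2 : ∀ a b, 0 < a → a < b → v a < v b → w b < w a → a ≤ k ∧ k < b) :
    kBruhat k v w :=
  KBruhat.kBruhat_of_criterion hw0 hw
    { apply_zero := hv0
      apply_of_gt := hv
      le_of_le := fun a ha hak => (h1 a (k + 1) ha hak k.lt_succ_self).1
      ge_of_gt := fun b hkb => (h1 1 b one_pos hk hkb).2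
      le_lt_of_inv := h2 }

/-- The converse direction of the Bergeron–Sottile characterization of the `k`-Bruhat
order on `S_n`: if (1) `v(a) ≤ w(a)` and `v(b) ≥ w(b)` for all `a ≤ k < b`, and
(2) whenever `a < b` with `v(a) < v(b)` and `w(a) > w(b)` one has `a ≤ k < b`,
then `v ≤_k w`. -/
theorem kBruhat_characterization_backward (n k : ℕ) (hk : 1 ≤ k) (hkn : k ≤ n)
    (v w : Equiv.Perm ℕ)
    (hv0 : v 0 = 0) (hw0 : w 0 = 0)
    (hv : ∀ i, n < i → v i = i) (hw : ∀ i, n < i → w i = i)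
    (h1 : ∀ a b, 0 < a → a ≤ k → k < b → v a ≤ w a ∧ w b ≤ v b)
    (h2 : ∀ a b, 0 < a → a < b → v a < v b → w b < w a → a ≤ k ∧ k < b) :
    kBruhat k v w :=
  kBruhat_characterization_backward_general n k hk v w hv0 hw0 hv hw h1 h2

end
end
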